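/- arXiv:2303.06134 — 9 statements merged into one kernel-verified Lean document; each statement's English description precedes it below -/
import Mathlib

section
/- Let k ≥ 1 and let x₁ < x₂ < … < x_k < x_{k+1} < … < x_{2k} be real numbers. Then the function p(c) = ∏_{i=1}^{k} (c − x_i) − ∏_{i=k+1}^{2k} (x_i − c) has exactly one zero c in the open interval (x_k, x_{k+1}). -/
/-!
On `(x (k-1), x k)` every factor is positive, the first
product strictly increases and the second strictly decreases, so `p` is strictly increasing
there. At `c = x (k-1)` the first product vanishes and `p < 0`; at `c = x k` the second one does
and `p > 0`. The intermediate value theorem gives a zero, strict monotonicity its uniqueness.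
-/

open Finset

theorem existsUnique_eq_of_strictMonoOn_Ioo {α δ : Type*} [ConditionallyCompleteLinearOrder α]
    [TopologicalSpace α] [OrderTopology α] [DenselyOrdered α] [LinearOrder δ]
    [TopologicalSpace δ] [OrderClosedTopology δ] {f : α → δ} {a b : α} {y : δ} (hab : a ≤ b)
    (hcont : ContinuousOn f (Set.Icc a b)) (hmono : StrictMonoOn f (Set.Ioo a b))
    (hy : y ∈ Set.Ioo (f a) (f b)) :
    ∃! c, c ∈ Set.Ioo a b ∧ f c = y := by
  obtain ⟨c, hc, hfc⟩ := intermediate_value_Ioo hab hcont hy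
  exact ⟨c, ⟨hc, hfc⟩, fun d ⟨hd, hfd⟩ => hmono.injOn hd hc (hfd.trans hfc.symm)⟩

section GammaMedian

variable {ι : Type*} (s t : Finset ι) (x : ι → ℝ)

def gammaMedianFun (c : ℝ) : ℝ :=
  ∏ i ∈ s, (c - x i) - ∏ i ∈ t, (x i - c)

theorem continuous_gammaMedianFun : Continuous (gammaMedianFun s t x) := by
  unfold gammaMedianFun
  fun_prop

variable {s t x}

theorem gammaMedianFun_strictMonoOn {a b : ℝ} (hs : s.Nonempty) (ht : t.Nonempty)
    (hsa : ∀ i ∈ s, x i ≤ a) (htb : ∀ i ∈ t, b ≤ x i) :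
    StrictMonoOn (gammaMedianFun s t x) (Set.Ioo a b) := by
  intro c hc d hd hcd
  have hleft : ∏ i ∈ s, (c - x i) < ∏ i ∈ s, (d - x i) :=
    prod_lt_prod_of_nonempty (fun i hi => by linarith [hsa i hi, hc.1])
      (fun i _ => by linarith) hs
  have hright : ∏ i ∈ t, (x i - d) < ∏ i ∈ t, (x i - c) :=
    prod_lt_prod_of_nonempty (fun i hi => by linarith [htb i hi, hd.2])
      (fun i _ => by linarith) ht
  unfold gammaMedianFun
  linarith

theorem gammaMedianFun_neg {i : ι} (hi : i ∈ s) (ht : ∀ j ∈ t, x i < x j) :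
    gammaMedianFun s t x (x i) < 0 := by
  have hleft : ∏ l ∈ s, (x i - x l) = 0 := prod_eq_zero hi (sub_self _)
  have hright : 0 < ∏ j ∈ t, (x j - x i) := prod_pos fun j hj => sub_pos.2 (ht j hj)
  unfold gammaMedianFun
  linarith

theorem gammaMedianFun_pos {j : ι} (hj : j ∈ t) (hs : ∀ i ∈ s, x i < x j) :
    0 < gammaMedianFun s t x (x j) := by
  have hleft : 0 < ∏ i ∈ s, (x j - x i) := prod_pos fun i hi => sub_pos.2 (hs i hi)
  have hright : ∏ l ∈ t, (x l - x j) = 0 := prod_eq_zero hj (sub_self _)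
  unfold gammaMedianFun
  linarith

theorem gammaMedianFun_existsUnique_zero {i j : ι} (hi : i ∈ s) (hj : j ∈ t)
    (hs : ∀ l ∈ s, x l ≤ x i) (ht : ∀ l ∈ t, x j ≤ x l) (hij : x i < x j) :
    ∃! c, c ∈ Set.Ioo (x i) (x j) ∧ gammaMedianFun s t x c = 0 :=
  existsUnique_eq_of_strictMonoOn_Ioo hij.le (continuous_gammaMedianFun s t x).continuousOn
    (gammaMedianFun_strictMonoOn ⟨i, hi⟩ ⟨j, hj⟩ hs ht)
    ⟨gammaMedianFun_neg hi fun l hl => hij.trans_le (ht l hl),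
      gammaMedianFun_pos hj fun l hl => (hs l hl).trans_lt hij⟩

end GammaMedian

/-- For data `x 0 < x 1 < … < x (2k-1)`, the function
`p(c) = ∏_{i<k} (c - x i) - ∏_{k ≤ i < 2k} (x i - c)` has exactly one zero in the open
interval `(x (k-1), x k)` (the γ-median of the data). -/
theorem gammaMedian_existsUnique (k : ℕ) (hk : 1 ≤ k) (x : ℕ → ℝ)
    (hmono : ∀ i, i + 1 < 2 * k → x i < x (i + 1)) :
    ∃! c : ℝ, c ∈ Set.Ioo (x (k - 1)) (x k) ∧
      (∏ i ∈ Finset.range k, (c - x i)) - (∏ i ∈ Finset.Ico k (2 * k), (x i - c)) = 0 := by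
  have hx : StrictMonoOn x (Set.Iic (2 * k - 1)) :=
    strictMonoOn_Iic_of_lt_succ fun m hm => by simpa using hmono m (by omega)
  have hle {i j : ℕ} (hij : i ≤ j) (hj : j < 2 * k) : x i ≤ x j :=
    hx.monotoneOn (Set.mem_Iic.2 (by omega)) (Set.mem_Iic.2 (by omega)) hij
  exact gammaMedianFun_existsUnique_zero (mem_range.2 (by omega))
    (mem_Ico.2 ⟨le_rfl, by omega⟩)
    (fun l hl => hle (Nat.le_sub_one_of_lt (mem_range.1 hl)) (by omega))
    (fun l hl => hle (mem_Ico.1 hl).1 (mem_Ico.1 hl).2)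
    (hx (Set.mem_Iic.2 (by omega)) (Set.mem_Iic.2 (by omega)) (by omega))
end

section
/- Let p > 2, ε > 0 and n ≥ 1. There exists a constant C > 0, depending only on n, p and ε, with the following property: for every bounded measurable function u : ℝⁿ → ℝ and all points x₁, x₂ ∈ ℝⁿ, if λ₁ and λ₂ are real numbers satisfying ∫_{B_ε(x₁)} |u(x) − λ₁|^{p−2}(u(x) − λ₁) dx = 0 and ∫_{B_ε(x₂)} |u(x) − λ₂|^{p−2}(u(x) − λ₂) dx = 0, then |λ₁ − λ₂| ≤ C·‖u‖_{L^∞}·|x₁ − x₂|^{1/(p−1)}. In particular, the map x ↦ A_ε(u)(x) is Hölder continuous with exponent 1/(p−1). -/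
/-!
For `p ≥ 2` the map `φ(t) = |t|^(p-2) t` is strongly monotone:
`φ t - φ s ≥ 2^(2-p) (t - s)^(p-1)` for `s ≤ t`. If `λ₁ ≥ λ₂` are the `p`-averages of `u` over
`B₁ = B_r(x₁)` and `B₂ = B_r(x₂)`, integrating this over `B₁` gives
`2^(2-p) (λ₁ - λ₂)^(p-1) |B₁| ≤ ∫_{B₁} φ(u - λ₂) = ∫_{B₁} φ(u - λ₂) - ∫_{B₂} φ(u - λ₂)`,
and the right-hand side is at most `(2‖u‖_∞)^(p-1) |B₁ △ B₂|` because `|λ₂| ≤ ‖u‖_∞`.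
Since `|B₁ △ B₂| ≤ 2^(n+1) (|x₁ - x₂| / r) |B₁|`, taking `(p-1)`-th roots gives the bound.
-/

open MeasureTheory Metric Set Module

lemma one_add_pow_sub_one_le {t : ℝ} (ht₀ : 0 ≤ t) (ht₁ : t ≤ 1) (n : ℕ) :
    (1 + t) ^ n - 1 ≤ (2 ^ n - 1) * t := by
  induction n with
  | zero => simp
  | succ n ih =>
    have hpow : 0 ≤ (1 + t) ^ n - 1 := sub_nonneg.2 (one_le_pow₀ (by linarith))
    rw [pow_succ, pow_succ]
    nlinarith

namespace MeasureTheory.Measure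

variable {E : Type*} [NormedAddCommGroup E] [NormedSpace ℝ E] [FiniteDimensional ℝ E]
  [MeasurableSpace E] [BorelSpace E] (μ : Measure E) [μ.IsAddHaarMeasure]

lemma addHaar_real_ball_of_pos (x : E) {r : ℝ} (hr : 0 < r) :
    μ.real (ball x r) = r ^ finrank ℝ E * μ.real (ball 0 1) := by
  rw [measureReal_def, Measure.addHaar_ball_of_pos μ x hr, ENNReal.toReal_mul,
    ENNReal.toReal_ofReal (by positivity), measureReal_def]

lemma addHaar_real_ball_sdiff_ball_le (x₁ x₂ : E) {r : ℝ} (hr : 0 < r) :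
    μ.real (ball x₁ r \ ball x₂ r) ≤ 2 ^ finrank ℝ E * (dist x₁ x₂ / r) * μ.real (ball x₁ r) := by
  set n := finrank ℝ E
  set t := dist x₁ x₂ / r with ht
  have ht₀ : 0 ≤ t := by positivity
  rcases le_total 1 t with ht₁ | ht₁
  · calc μ.real (ball x₁ r \ ball x₂ r) ≤ 1 * 1 * μ.real (ball x₁ r) := by
          rw [one_mul, one_mul]; exact measureReal_mono sdiff_subset
      _ ≤ 2 ^ n * t * μ.real (ball x₁ r) := by gcongr; exact one_le_pow₀ one_le_two
  · have hd : dist x₁ x₂ = r * t := by rw [ht]; field_simp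
    have hsub : ball x₁ r \ ball x₂ r ⊆ ball x₂ (r * (1 + t)) \ ball x₂ r := by
      refine sdiff_subset_sdiff_left fun y hy => ?_
      rw [mem_ball] at hy ⊢
      linarith [dist_triangle y x₁ x₂]
    calc μ.real (ball x₁ r \ ball x₂ r) ≤ μ.real (ball x₂ (r * (1 + t)) \ ball x₂ r) :=
          measureReal_mono hsub ((measure_mono sdiff_subset).trans_lt measure_ball_lt_top).ne
      _ = μ.real (ball x₂ (r * (1 + t))) - μ.real (ball x₂ r) :=
          measureReal_sdiff (ball_subset_ball (by nlinarith)) measurableSet_ball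
      _ = ((1 + t) ^ n - 1) * μ.real (ball x₁ r) := by
          rw [addHaar_real_ball_of_pos μ _ (by positivity), addHaar_real_ball_of_pos μ _ hr,
            addHaar_real_ball_of_pos μ _ hr, mul_pow]
          ring
      _ ≤ (2 ^ n - 1) * t * μ.real (ball x₁ r) := by
          gcongr; exact one_add_pow_sub_one_le ht₀ ht₁ n
      _ ≤ 2 ^ n * t * μ.real (ball x₁ r) := by gcongr; linarith

end MeasureTheory.Measure

lemma setIntegral_sub_setIntegral_le {α : Type*} [MeasurableSpace α] {μ : Measure α}
    {s t : Set α} {f : α → ℝ} {K : ℝ} (hs : MeasurableSet s) (ht : MeasurableSet t)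
    (hμs : μ s ≠ ⊤) (hμt : μ t ≠ ⊤) (hfs : IntegrableOn f s μ) (hft : IntegrableOn f t μ)
    (hf : ∀ᵐ x ∂μ, |f x| ≤ K) :
    ∫ x in s, f x ∂μ - ∫ x in t, f x ∂μ ≤ K * (μ.real (s \ t) + μ.real (t \ s)) := by
  have bound : ∀ a b : Set α, μ a ≠ ⊤ → |∫ x in a \ b, f x ∂μ| ≤ K * μ.real (a \ b) :=
    fun a b ha => by
      simpa only [Real.norm_eq_abs] using norm_setIntegral_le_of_norm_le_const_ae (f := f)
        ((measure_mono sdiff_subset).trans_lt ha.lt_top) (ae_restrict_of_ae hf)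
  rw [← integral_inter_add_sdiff ht hfs, ← integral_inter_add_sdiff hs hft, inter_comm]
  linarith [le_abs_self (∫ x in s \ t, f x ∂μ), neg_abs_le (∫ x in t \ s, f x ∂μ),
    bound s t hμs, bound t s hμt]

namespace PAverage

noncomputable def phi (p t : ℝ) : ℝ := |t| ^ (p - 2) * t

variable {p : ℝ}

@[simp] lemma phi_zero : phi p 0 = 0 := by simp [phi]

lemma phi_neg (t : ℝ) : phi p (-t) = -phi p t := by simp [phi]

lemma phi_of_nonneg (hp : p ≠ 1) {t : ℝ} (ht : 0 ≤ t) : phi p t = t ^ (p - 1) := by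
  rcases ht.eq_or_lt with rfl | ht
  · simp [Real.zero_rpow (sub_ne_zero.2 hp)]
  · rw [phi, abs_of_pos ht, show p - 1 = p - 2 + 1 by ring, Real.rpow_add ht, Real.rpow_one]

lemma abs_phi (hp : p ≠ 1) (t : ℝ) : |phi p t| = |t| ^ (p - 1) := by
  rw [← phi_of_nonneg hp (abs_nonneg t), phi, phi, abs_mul, abs_abs,
    abs_of_nonneg (Real.rpow_nonneg (abs_nonneg t) _)]

lemma abs_phi_le (hp : 1 < p) {t K : ℝ} (ht : |t| ≤ K) : |phi p t| ≤ K ^ (p - 1) := by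
  rw [abs_phi hp.ne']
  exact Real.rpow_le_rpow (abs_nonneg t) ht (by linarith)

@[fun_prop]
lemma measurable_phi : Measurable (phi p) := by
  unfold phi; fun_prop

lemma rpow_sub_le_phi_sub_phi_of_nonneg (hp : 2 ≤ p) {s t : ℝ} (hs : 0 ≤ s) (hst : s ≤ t) :
    (t - s) ^ (p - 1) ≤ phi p t - phi p s := by
  have hp1 : p ≠ 1 := by linarith
  rw [phi_of_nonneg hp1 hs, phi_of_nonneg hp1 (hs.trans hst), le_sub_iff_add_le]
  simpa using Real.add_rpow_le_rpow_add (sub_nonneg.2 hst) hs (by linarith : 1 ≤ p - 1)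

/-- For `s < 0 < t` the constant comes from the power-mean inequality
`(a + b) ^ q ≤ 2 ^ (q - 1) * (a ^ q + b ^ q)`. -/
lemma two_rpow_mul_rpow_sub_le_phi_sub_phi (hp : 2 ≤ p) {s t : ℝ} (hst : s ≤ t) :
    2 ^ (2 - p) * (t - s) ^ (p - 1) ≤ phi p t - phi p s := by
  have hc : (2 : ℝ) ^ (2 - p) ≤ 1 := Real.rpow_le_one_of_one_le_of_nonpos one_le_two (by linarith)
  have hpos : 0 ≤ (t - s) ^ (p - 1) := Real.rpow_nonneg (sub_nonneg.2 hst) _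
  rcases le_total 0 s with hs | hs
  · nlinarith [rpow_sub_le_phi_sub_phi_of_nonneg hp hs hst]
  rcases le_total t 0 with ht | ht
  · have := rpow_sub_le_phi_sub_phi_of_nonneg hp (neg_nonneg.2 ht) (neg_le_neg hst)
    rw [phi_neg, phi_neg, neg_sub_neg] at this
    nlinarith
  · have hp1 : p ≠ 1 := by linarith
    have hmean : (t + -s) ^ (p - 1) ≤ 2 ^ (p - 1 - 1) * (t ^ (p - 1) + (-s) ^ (p - 1)) := by
      have := NNReal.coe_le_coe.2 <|
        NNReal.rpow_add_le_mul_rpow_add_rpow t.toNNReal (-s).toNNReal (by linarith : 1 ≤ p - 1)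
      push_cast at this
      rwa [Real.coe_toNNReal _ ht, Real.coe_toNNReal _ (neg_nonneg.2 hs)] at this
    have h2 : (2 : ℝ) ^ (2 - p) * 2 ^ (p - 1 - 1) = 1 := by
      rw [← Real.rpow_add two_pos, show 2 - p + (p - 1 - 1) = 0 by ring, Real.rpow_zero]
    rw [← neg_neg s, phi_neg, phi_of_nonneg hp1 ht, phi_of_nonneg hp1 (neg_nonneg.2 hs)]
    calc (2 : ℝ) ^ (2 - p) * (t - - -s) ^ (p - 1) = 2 ^ (2 - p) * (t + -s) ^ (p - 1) := by
          congr 2; ring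
      _ ≤ 2 ^ (2 - p) * (2 ^ (p - 1 - 1) * (t ^ (p - 1) + (-s) ^ (p - 1))) := by gcongr
      _ = t ^ (p - 1) - -(-s) ^ (p - 1) := by rw [← mul_assoc, h2]; ring

lemma strictMono_phi (hp : 2 ≤ p) : StrictMono (phi p) := fun s t hst => by
  have := two_rpow_mul_rpow_sub_le_phi_sub_phi hp hst.le
  have : 0 < 2 ^ (2 - p) * (t - s) ^ (p - 1) := by
    have := sub_pos.2 hst; positivity
  linarith

section General

variable {α : Type*} [MeasurableSpace α] {μ : Measure α} {s : Set α} {u : α → ℝ}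
  {p M lam lam₁ lam₂ : ℝ}

/-- The Euler–Lagrange equation of `lam ↦ ∫ x in s, |u x - lam| ^ p ∂μ`, whose unique solution
is the `p`-average of `u` over `s`. -/
def IsPAverage (p : ℝ) (μ : Measure α) (s : Set α) (u : α → ℝ) (lam : ℝ) : Prop :=
  ∫ x in s, phi p (u x - lam) ∂μ = 0

lemma integrableOn_phi_sub (hp : 1 < p) (hu : AEStronglyMeasurable u μ)
    (hM : ∀ᵐ x ∂μ, |u x| ≤ M) (hs : μ s ≠ ⊤) (lam : ℝ) :
    IntegrableOn (fun x => phi p (u x - lam)) s μ :=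
  Measure.integrableOn_of_bounded (M := (M + |lam|) ^ (p - 1)) hs
    (measurable_phi.comp_aemeasurable (hu.aemeasurable.sub_const lam)).aestronglyMeasurable
    (ae_restrict_of_ae <| hM.mono fun x hx =>
      abs_phi_le hp <| (abs_sub (u x) lam).trans (by linarith))

lemma IsPAverage.abs_le (hp : 2 ≤ p) (h : IsPAverage p μ s u lam)
    (hu : AEStronglyMeasurable u μ) (hM : ∀ᵐ x ∂μ, |u x| ≤ M) (hs₀ : μ s ≠ 0) (hs : μ s ≠ ⊤) :
    |lam| ≤ M := by
  have hint := integrableOn_phi_sub (p := p) (by linarith) hu hM hs lam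
  have hconst (c : ℝ) : IntegrableOn (fun _ => c) s μ := integrableOn_const hs
  have hpos : 0 < μ.real s := ENNReal.toReal_pos hs₀ hs
  have hmono := strictMono_phi (p := p) hp
  have upper : μ.real s * phi p (-M - lam) ≤ 0 := by
    calc μ.real s * phi p (-M - lam) = ∫ _ in s, phi p (-M - lam) ∂μ := by
          rw [setIntegral_const, smul_eq_mul]
      _ ≤ ∫ x in s, phi p (u x - lam) ∂μ := setIntegral_mono_ae (hconst _) hint <|
          hM.mono fun x hx => hmono.monotone (by linarith [neg_abs_le (u x)])
      _ = 0 := h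
  have lower : 0 ≤ μ.real s * phi p (M - lam) := by
    calc 0 = ∫ x in s, phi p (u x - lam) ∂μ := h.symm
      _ ≤ ∫ _ in s, phi p (M - lam) ∂μ := setIntegral_mono_ae hint (hconst _) <|
          hM.mono fun x hx => hmono.monotone (by linarith [le_abs_self (u x)])
      _ = μ.real s * phi p (M - lam) := by rw [setIntegral_const, smul_eq_mul]
  have h₁ : phi p (-M - lam) ≤ phi p 0 := by
    rw [phi_zero]; exact nonpos_of_mul_nonpos_right upper hpos
  have h₂ : phi p 0 ≤ phi p (M - lam) := by
    rw [phi_zero]; exact nonneg_of_mul_nonneg_right lower hpos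
  rw [hmono.le_iff_le] at h₁ h₂
  exact _root_.abs_le.2 ⟨by linarith, by linarith⟩

lemma IsPAverage.mul_rpow_sub_le_setIntegral (hp : 2 ≤ p) (h₁ : IsPAverage p μ s u lam₁)
    (hu : AEStronglyMeasurable u μ) (hM : ∀ᵐ x ∂μ, |u x| ≤ M) (hs : μ s ≠ ⊤)
    (hlam : lam₂ ≤ lam₁) :
    2 ^ (2 - p) * (lam₁ - lam₂) ^ (p - 1) * μ.real s ≤ ∫ x in s, phi p (u x - lam₂) ∂μ := by
  have hint₁ := integrableOn_phi_sub (p := p) (by linarith) hu hM hs lam₁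
  have hint₂ := integrableOn_phi_sub (p := p) (by linarith) hu hM hs lam₂
  calc 2 ^ (2 - p) * (lam₁ - lam₂) ^ (p - 1) * μ.real s
      = ∫ _ in s, 2 ^ (2 - p) * (lam₁ - lam₂) ^ (p - 1) ∂μ := by
        rw [setIntegral_const, smul_eq_mul, mul_comm]
    _ ≤ ∫ x in s, (phi p (u x - lam₂) - phi p (u x - lam₁)) ∂μ :=
        setIntegral_mono (integrableOn_const hs) (hint₂.sub hint₁) fun x => by
          simpa using two_rpow_mul_rpow_sub_le_phi_sub_phi hp
            (by linarith : u x - lam₁ ≤ u x - lam₂)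
    _ = ∫ x in s, phi p (u x - lam₂) ∂μ := by rw [integral_sub hint₂ hint₁, h₁, sub_zero]

end General

section Holder

variable {E : Type*} [NormedAddCommGroup E] [NormedSpace ℝ E] [FiniteDimensional ℝ E]
  [MeasurableSpace E] [BorelSpace E] {μ : Measure E} [μ.IsAddHaarMeasure] {u : E → ℝ}
  {p r M lam₁ lam₂ : ℝ} {x₁ x₂ : E}

lemma IsPAverage.rpow_sub_le (hp : 2 ≤ p) (hr : 0 < r) (hu : AEStronglyMeasurable u μ)
    (hM : ∀ᵐ x ∂μ, |u x| ≤ M) (h₁ : IsPAverage p μ (ball x₁ r) u lam₁)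
    (h₂ : IsPAverage p μ (ball x₂ r) u lam₂) (hlam : lam₂ ≤ lam₁) :
    (lam₁ - lam₂) ^ (p - 1)
      ≤ (2 * M) ^ (p - 1) * (2 ^ ((finrank ℝ E : ℝ) + p - 1) / r * dist x₁ x₂) := by
  set n := finrank ℝ E
  set V := μ.real (ball x₁ r)
  have hV : 0 < V := ENNReal.toReal_pos (measure_ball_pos μ x₁ hr).ne' measure_ball_lt_top.ne
  have hM₂ : |lam₂| ≤ M :=
    h₂.abs_le hp hu hM (measure_ball_pos μ x₂ hr).ne' measure_ball_lt_top.ne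
  have hM₀ : 0 ≤ M := (abs_nonneg _).trans hM₂
  have hf : ∀ᵐ x ∂μ, |phi p (u x - lam₂)| ≤ (2 * M) ^ (p - 1) := hM.mono fun x hx =>
    abs_phi_le (by linarith) ((abs_sub _ _).trans (by linarith))
  have hsdiff : μ.real (ball x₁ r \ ball x₂ r) + μ.real (ball x₂ r \ ball x₁ r)
      ≤ 2 * (2 ^ n * (dist x₁ x₂ / r) * V) := by
    have h₁₂ := μ.addHaar_real_ball_sdiff_ball_le x₁ x₂ hr
    have h₂₁ := μ.addHaar_real_ball_sdiff_ball_le x₂ x₁ hr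
    rw [dist_comm, Measure.addHaar_real_ball_center, ← Measure.addHaar_real_ball_center μ x₁]
      at h₂₁
    linarith
  have hint (x₀ : E) := integrableOn_phi_sub (p := p) (s := ball x₀ r) (by linarith) hu hM
    measure_ball_lt_top.ne lam₂
  have key : 2 ^ (2 - p) * (lam₁ - lam₂) ^ (p - 1) * V
      ≤ (2 * M) ^ (p - 1) * (2 * (2 ^ n * (dist x₁ x₂ / r) * V)) :=
    calc _ ≤ ∫ x in ball x₁ r, phi p (u x - lam₂) ∂μ :=
          h₁.mul_rpow_sub_le_setIntegral hp hu hM measure_ball_lt_top.ne hlam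
      _ = ∫ x in ball x₁ r, phi p (u x - lam₂) ∂μ - ∫ x in ball x₂ r, phi p (u x - lam₂) ∂μ := by
          rw [show ∫ x in ball x₂ r, phi p (u x - lam₂) ∂μ = 0 from h₂, sub_zero]
      _ ≤ (2 * M) ^ (p - 1) * (μ.real (ball x₁ r \ ball x₂ r) + μ.real (ball x₂ r \ ball x₁ r)) :=
          setIntegral_sub_setIntegral_le measurableSet_ball measurableSet_ball
            measure_ball_lt_top.ne measure_ball_lt_top.ne (hint x₁) (hint x₂) hf
      _ ≤ _ := by gcongr
  have h2 : (2 : ℝ) ^ (2 - p) * 2 ^ ((n : ℝ) + p - 1) = 2 * 2 ^ n := by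
    rw [← Real.rpow_add two_pos, show 2 - p + (n + p - 1) = ((n + 1 : ℕ) : ℝ) by push_cast; ring,
      Real.rpow_natCast, pow_succ']
  refine le_of_mul_le_mul_left ?_ (by positivity : 0 < 2 ^ (2 - p) * V)
  calc 2 ^ (2 - p) * V * (lam₁ - lam₂) ^ (p - 1) = 2 ^ (2 - p) * (lam₁ - lam₂) ^ (p - 1) * V := by
        ring
    _ ≤ _ := key
    _ = (2 * M) ^ (p - 1) * (2 ^ (2 - p) * 2 ^ ((n : ℝ) + p - 1)) * (dist x₁ x₂ / r) * V := by
        rw [h2]; ring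
    _ = _ := by ring

noncomputable def holderConst (n : ℕ) (p r : ℝ) : ℝ :=
  2 * (2 ^ ((n : ℝ) + p - 1) / r) ^ (1 / (p - 1))

lemma IsPAverage.sub_le (hp : 2 ≤ p) (hr : 0 < r) (hu : AEStronglyMeasurable u μ)
    (hM : ∀ᵐ x ∂μ, |u x| ≤ M) (h₁ : IsPAverage p μ (ball x₁ r) u lam₁)
    (h₂ : IsPAverage p μ (ball x₂ r) u lam₂) :
    lam₁ - lam₂ ≤ holderConst (finrank ℝ E) p r * M * dist x₁ x₂ ^ (1 / (p - 1)) := by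
  have hM₀ : 0 ≤ M := (abs_nonneg _).trans <|
    h₁.abs_le hp hu hM (measure_ball_pos μ x₁ hr).ne' measure_ball_lt_top.ne
  rcases le_total lam₁ lam₂ with hlam | hlam
  · have : 0 ≤ holderConst (finrank ℝ E) p r * M * dist x₁ x₂ ^ (1 / (p - 1)) := by
      unfold holderConst; positivity
    linarith
  have hq : p - 1 ≠ 0 := by linarith
  set B : ℝ := 2 ^ ((finrank ℝ E : ℝ) + p - 1) / r
  have hB : 0 ≤ B := by positivity
  calc lam₁ - lam₂ = ((lam₁ - lam₂) ^ (p - 1)) ^ (p - 1)⁻¹ :=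
        (Real.rpow_rpow_inv (sub_nonneg.2 hlam) hq).symm
    _ ≤ ((2 * M) ^ (p - 1) * (B * dist x₁ x₂)) ^ (p - 1)⁻¹ :=
        Real.rpow_le_rpow (Real.rpow_nonneg (sub_nonneg.2 hlam) _)
          (h₁.rpow_sub_le hp hr hu hM h₂ hlam) (inv_nonneg.2 (by linarith))
    _ = holderConst (finrank ℝ E) p r * M * dist x₁ x₂ ^ (1 / (p - 1)) := by
        rw [Real.mul_rpow (by positivity) (by positivity), Real.rpow_rpow_inv (by positivity) hq,
          Real.mul_rpow hB dist_nonneg, holderConst, one_div]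
        ring

lemma IsPAverage.abs_sub_le (hp : 2 ≤ p) (hr : 0 < r) (hu : AEStronglyMeasurable u μ)
    (hM : ∀ᵐ x ∂μ, |u x| ≤ M) (h₁ : IsPAverage p μ (ball x₁ r) u lam₁)
    (h₂ : IsPAverage p μ (ball x₂ r) u lam₂) :
    |lam₁ - lam₂| ≤ holderConst (finrank ℝ E) p r * M * dist x₁ x₂ ^ (1 / (p - 1)) :=
  abs_sub_le_iff.2 ⟨h₁.sub_le hp hr hu hM h₂, dist_comm x₁ x₂ ▸ h₂.sub_le hp hr hu hM h₁⟩

end Holder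

end PAverage

theorem pAverage_holder_general (n : ℕ) (p ε : ℝ) (hp : 2 < p) (hε : 0 < ε) :
    ∃ C > 0, ∀ u : EuclideanSpace ℝ (Fin n) → ℝ, Measurable u →
      eLpNorm u ⊤ volume < ⊤ →
      ∀ x₁ x₂ : EuclideanSpace ℝ (Fin n), ∀ lam₁ lam₂ : ℝ,
        (∫ x in Metric.ball x₁ ε, |u x - lam₁| ^ (p - 2) * (u x - lam₁)) = 0 →
        (∫ x in Metric.ball x₂ ε, |u x - lam₂| ^ (p - 2) * (u x - lam₂)) = 0 →
        |lam₁ - lam₂| ≤ C * (eLpNorm u ⊤ volume).toReal * dist x₁ x₂ ^ (1 / (p - 1)) := by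
  refine ⟨PAverage.holderConst (finrank ℝ (EuclideanSpace ℝ (Fin n))) p ε,
    by unfold PAverage.holderConst; positivity,
    fun u hu hbdd x₁ x₂ lam₁ lam₂ h₁ h₂ => ?_⟩
  have hM : ∀ᵐ x ∂volume, |u x| ≤ (eLpNorm u ⊤ volume).toReal := by
    simpa only [toReal_eLpNorm hu.aestronglyMeasurable, Real.norm_eq_abs] using
      ae_le_lpNorm_exponent_top ⟨hu.aestronglyMeasurable, hbdd⟩
  exact PAverage.IsPAverage.abs_sub_le hp.le hε hu.aestronglyMeasurable hM h₁ h₂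

/-- Hölder continuity (with exponent `1/(p-1)`) of the `p`-average over balls of radius `ε`,
for `p > 2`: if `λᵢ` is the `p`-average of a bounded measurable `u` over `B_ε(xᵢ)`
(characterized by `∫_{B_ε(xᵢ)} |u - λᵢ|^{p-2}(u - λᵢ) = 0`), then
`|λ₁ - λ₂| ≤ C ‖u‖_∞ |x₁ - x₂|^{1/(p-1)}`. -/
theorem pAverage_holder (n : ℕ) (hn : 1 ≤ n) (p ε : ℝ) (hp : 2 < p) (hε : 0 < ε) :
    ∃ C > 0, ∀ u : EuclideanSpace ℝ (Fin n) → ℝ, Measurable u →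
      eLpNorm u ⊤ volume < ⊤ →
      ∀ x₁ x₂ : EuclideanSpace ℝ (Fin n), ∀ lam₁ lam₂ : ℝ,
        (∫ x in Metric.ball x₁ ε, |u x - lam₁| ^ (p - 2) * (u x - lam₁)) = 0 →
        (∫ x in Metric.ball x₂ ε, |u x - lam₂| ^ (p - 2) * (u x - lam₂)) = 0 →
        |lam₁ - lam₂| ≤ C * (eLpNorm u ⊤ volume).toReal * dist x₁ x₂ ^ (1 / (p - 1)) :=
  pAverage_holder_general n p ε hp hε
end

section
/- Let X be a compact topological space equipped with a positive finite Borel measure ν with ν(X) > 0, let 1 < p < ∞, and let φ, ψ : X → ℝ be continuous with φ(y) ≤ ψ(y) for all y ∈ X. Then A_p(φ) ≤ A_p(ψ). Moreover, if in addition φ(y) < ψ(y) holds on a set of positive ν-measure, then A_p(φ) < A_p(ψ). -/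
/-!
A minimizer `a` of `c ↦ ∫ |φ - c|^p dν` is a critical point; differentiating under the
integral gives `∫ σ(φ - a) dν = 0`, where `σ(t) = |t|^(p-2) t` (`signedPow p t`) is `1/p`
times the derivative of `|t|^p`. Since `σ` is strictly increasing, `(f, c) ↦ ∫ σ(f - c) dν`
is increasing in `f` and strictly decreasing in `c`; comparing the two vanishing integrals
for `φ ≤ ψ` forces `a ≤ b`, with strict inequality when `φ < ψ` on a set of positive measure.
-/

open MeasureTheory

noncomputable def signedPow (p t : ℝ) : ℝ := |t| ^ (p - 2) * t

section signedPow

variable {p : ℝ}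

lemma signedPow_neg (p t : ℝ) : signedPow p (-t) = -signedPow p t := by
  simp [signedPow]

lemma signedPow_of_nonneg (hp : 1 < p) {t : ℝ} (ht : 0 ≤ t) : signedPow p t = t ^ (p - 1) := by
  rw [signedPow, abs_of_nonneg ht, ← Real.rpow_add_one' ht (by linarith)]
  ring_nf

lemma strictMono_signedPow (hp : 1 < p) : StrictMono (signedPow p) :=
  strictMono_of_odd_strictMonoOn_nonneg (signedPow_neg p) fun s hs t ht hst => by
    rw [signedPow_of_nonneg hp hs, signedPow_of_nonneg hp ht]
    exact Real.rpow_lt_rpow hs hst (by linarith)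

lemma hasDerivAt_abs_rpow_eq_signedPow (hp : 1 < p) (t : ℝ) :
    HasDerivAt (fun s : ℝ => |s| ^ p) (p * signedPow p t) t := by
  simpa only [signedPow, mul_assoc] using hasDerivAt_abs_rpow t hp

/-- Continuity at `0` for `p < 2` comes from `|t|^p` being `C¹`. -/
lemma continuous_signedPow (hp : 1 < p) : Continuous (signedPow p) := by
  have hderiv : deriv (fun t : ℝ => ‖t‖ ^ p) = fun t => p * signedPow p t :=
    funext fun t => by
      simpa only [Real.norm_eq_abs] using (hasDerivAt_abs_rpow_eq_signedPow hp t).deriv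
  have hcont := (contDiff_norm_rpow (E := ℝ) hp).continuous_deriv le_rfl
  rw [hderiv] at hcont
  simpa [inv_mul_cancel_left₀ (by linarith : p ≠ 0)] using hcont.const_mul p⁻¹

end signedPow

theorem integral_lt_integral_of_le_of_lt_on {α : Type*} [MeasurableSpace α] {μ : Measure α}
    {f g : α → ℝ} {s : Set α} (hf : Integrable f μ) (hg : Integrable g μ)
    (hfg : ∀ x, f x ≤ g x) (hs : ∀ x ∈ s, f x < g x) (hμs : 0 < μ s) :
    ∫ x, f x ∂μ < ∫ x, g x ∂μ := by
  have hsupp : s ⊆ Function.support (g - f) := fun x hx => (sub_pos.mpr (hs x hx)).ne'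
  have hpos : 0 < ∫ x, (g - f) x ∂μ :=
    (integral_pos_iff_support_of_nonneg (fun x => sub_nonneg.mpr (hfg x)) (hg.sub hf)).mpr
      (hμs.trans_le (measure_mono hsupp))
  rw [Pi.sub_def, integral_sub hg hf] at hpos
  linarith

section CompactSpace

variable {X : Type*} [TopologicalSpace X] [CompactSpace X] [MeasurableSpace X]
  [OpensMeasurableSpace X] (ν : Measure X) [IsFiniteMeasure ν] {p : ℝ}

lemma integrable_signedPow_comp (hp : 1 < p) {u : X → ℝ} (hu : Continuous u) :
    Integrable (fun y => signedPow p (u y)) ν :=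
  ((continuous_signedPow hp).comp hu).integrable_of_hasCompactSupport
    (HasCompactSupport.of_compactSpace _)

lemma integral_signedPow_comp_mono (hp : 1 < p) {u v : X → ℝ} (hu : Continuous u)
    (hv : Continuous v) (huv : ∀ y, u y ≤ v y) :
    ∫ y, signedPow p (u y) ∂ν ≤ ∫ y, signedPow p (v y) ∂ν :=
  integral_mono (integrable_signedPow_comp ν hp hu) (integrable_signedPow_comp ν hp hv)
    fun y => (strictMono_signedPow hp).monotone (huv y)

lemma integral_signedPow_comp_lt (hp : 1 < p) {u v : X → ℝ} {s : Set X} (hu : Continuous u)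
    (hv : Continuous v) (huv : ∀ y, u y ≤ v y) (hs : ∀ y ∈ s, u y < v y) (hνs : 0 < ν s) :
    ∫ y, signedPow p (u y) ∂ν < ∫ y, signedPow p (v y) ∂ν :=
  integral_lt_integral_of_le_of_lt_on (integrable_signedPow_comp ν hp hu)
    (integrable_signedPow_comp ν hp hv) (fun y => (strictMono_signedPow hp).monotone (huv y))
    (fun y hy => strictMono_signedPow hp (hs y hy)) hνs

lemma hasDerivAt_integral_abs_sub_rpow (hp : 1 < p) {f : X → ℝ} (hf : Continuous f) (a : ℝ) :
    HasDerivAt (fun c => ∫ y, |f y - c| ^ p ∂ν) (-(p * ∫ y, signedPow p (f y - a) ∂ν)) a := by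
  -- the derivative in `c` is dominated by its maximum over the compact set `X × closedBall a 1`
  have hF : ∀ c : ℝ, Continuous fun y => |f y - c| ^ p := fun c =>
    ((hf.sub continuous_const).abs).rpow_const fun _ => Or.inr (by linarith)
  have hF' : Continuous fun z : X × ℝ => p * signedPow p (f z.1 - z.2) * (-1) := by
    have := continuous_signedPow hp
    fun_prop
  obtain ⟨C, hC⟩ :=
    (isCompact_univ.prod (isCompact_closedBall a 1)).exists_bound_of_continuousOn hF'.continuousOn
  have hbound : ∀ y, ∀ c ∈ Metric.ball a 1, ‖p * signedPow p (f y - c) * (-1)‖ ≤ C :=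
    fun y c hc => hC (y, c) ⟨trivial, Metric.ball_subset_closedBall hc⟩
  have hderiv : ∀ y, ∀ c ∈ Metric.ball a 1,
      HasDerivAt (fun c => |f y - c| ^ p) (p * signedPow p (f y - c) * (-1)) c :=
    fun y c _ => (hasDerivAt_abs_rpow_eq_signedPow hp (f y - c)).comp c
      ((hasDerivAt_id c).const_sub (f y))
  have key := (hasDerivAt_integral_of_dominated_loc_of_deriv_le (μ := ν)
    (Metric.ball_mem_nhds a one_pos) (.of_forall fun c => (hF c).aestronglyMeasurable)
    ((hF a).integrable_of_hasCompactSupport (.of_compactSpace _))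
    (hF'.comp (.prodMk_left a)).aestronglyMeasurable (.of_forall hbound) (integrable_const C)
    (.of_forall hderiv)).2
  simpa [integral_neg, integral_const_mul] using key

lemma integral_signedPow_sub_eq_zero_of_forall_le (hp : 1 < p) {f : X → ℝ} (hf : Continuous f)
    {a : ℝ} (hmin : ∀ c : ℝ, ∫ y, |f y - a| ^ p ∂ν ≤ ∫ y, |f y - c| ^ p ∂ν) :
    ∫ y, signedPow p (f y - a) ∂ν = 0 := by
  have hloc : IsLocalMin (fun c => ∫ y, |f y - c| ^ p ∂ν) a := .of_forall hmin
  have hcrit := hloc.hasDerivAt_eq_zero (hasDerivAt_integral_abs_sub_rpow ν hp hf a)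
  simpa [(by linarith : p ≠ 0)] using hcrit

end CompactSpace

/-- Monotonicity of the `p`-average: if `φ ≤ ψ` pointwise then `A_p(φ) ≤ A_p(ψ)`; if in
addition `φ < ψ` on a set of positive measure then `A_p(φ) < A_p(ψ)`. Here `a` and `b` are
the `p`-averages of `φ` and `ψ`, i.e. the minimizers of `λ ↦ ∫ |· - λ|^p dν`. -/
theorem pAverage_monotone {X : Type*} [TopologicalSpace X] [CompactSpace X]
    [MeasurableSpace X] [BorelSpace X]
    (ν : Measure X) [IsFiniteMeasure ν] (hν : 0 < ν Set.univ)
    (p : ℝ) (hp : 1 < p)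
    (φ ψ : X → ℝ) (hφ : Continuous φ) (hψ : Continuous ψ)
    (hle : ∀ y, φ y ≤ ψ y)
    (a b : ℝ)
    (ha : ∀ μ : ℝ, (∫ y, |φ y - a| ^ p ∂ν) ≤ ∫ y, |φ y - μ| ^ p ∂ν)
    (hb : ∀ μ : ℝ, (∫ y, |ψ y - b| ^ p ∂ν) ≤ ∫ y, |ψ y - μ| ^ p ∂ν) :
    a ≤ b ∧ (0 < ν {y | φ y < ψ y} → a < b) := by
  have hφa : ∫ y, signedPow p (φ y - a) ∂ν = 0 :=
    integral_signedPow_sub_eq_zero_of_forall_le ν hp hφ ha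
  have hψb : ∫ y, signedPow p (ψ y - b) ∂ν = 0 :=
    integral_signedPow_sub_eq_zero_of_forall_le ν hp hψ hb
  have hφ' : Continuous fun y => φ y - a := hφ.sub continuous_const
  have hψ' : Continuous fun y => ψ y - a := hψ.sub continuous_const
  have hψ'' : Continuous fun y => ψ y - b := hψ.sub continuous_const
  refine ⟨?_, fun hpos => ?_⟩
  · by_contra! hba
    have h1 := integral_signedPow_comp_mono ν hp hφ' hψ' fun y => by linarith [hle y]
    have h2 := integral_signedPow_comp_lt ν hp hψ' hψ'' (fun y => by linarith)
      (fun y _ => by linarith) hν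
    linarith
  · by_contra! hba
    have h1 := integral_signedPow_comp_lt ν hp hφ' hψ' (fun y => by linarith [hle y])
      (fun y (hy : φ y < ψ y) => by linarith) hpos
    have h2 := integral_signedPow_comp_mono ν hp hψ' hψ'' fun y => by linarith
    linarith
end

section
/- Let k ≥ 1 and α ∈ ℝ, and for j = 0, 1, …, 2k+1 let η_j = (cos(α + 2πj/(2k+2)), sin(α + 2πj/(2k+2))) ∈ ℝ² be 2k+2 equally spaced unit vectors. Then for every unit vector u ∈ ℝ² and every symmetric 2×2 real matrix A, Σ_{j=0}^{2k+1} ⟨u, η_j⟩^{2k−2} > 0 and ( Σ_{j=0}^{2k+1} ⟨u, η_j⟩^{2k−2} ⟨A η_j, η_j⟩ ) / ( Σ_{j=0}^{2k+1} ⟨u, η_j⟩^{2k−2} ) = (1/(2k))·tr(A) + ((2k−2)/(2k))·⟨A u, u⟩. -/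
/-!
Write `u = (cos φ, sin φ)` and `θⱼ = α - φ + 2πj/n` with `n = 2k + 2`, so that `⟨u, ηⱼ⟩ = cos θⱼ`.
In the orthonormal frame `(u, u⊥)`, `⟨Aηⱼ, ηⱼ⟩` is a quadratic form in `(cos θⱼ, sin θⱼ)` and
`tr A = ⟨Au, u⟩ + ⟨Au⊥, u⊥⟩`, so everything reduces to three moments of the polygon. Since
`∑ⱼ e^{itθⱼ} = 0` for `0 < |t| < n`, the moment `∑ⱼ cos^{2m} θⱼ` with `2m < n` equals
`n · C(2m, m) / 4^m` whatever the phase: it is positive, consecutive ones are in ratio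
`(2m+1)/(2m+2)`, and differentiating the phase-independent `∑ⱼ cos^{2m+2} θⱼ` in the phase
gives `∑ⱼ cos^{2m+1} θⱼ sin θⱼ = 0`.
-/

open Matrix Finset Real

theorem sum_exp_int_mul_equally_spaced {n : ℕ} {t : ℤ} (htn : t.natAbs < n) (β : ℝ) :
    ∑ j ∈ range n, Complex.exp (t * ↑(β + 2 * π * j / n) * Complex.I) =
      if t = 0 then (n : ℂ) else 0 := by
  split_ifs with ht
  · simp [ht]
  have hn : n ≠ 0 := by omega
  have hω := Complex.isPrimitiveRoot_exp n hn
  set ζ := Complex.exp (2 * π * Complex.I / n) ^ t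
  have hζ1 : ζ ≠ 1 := fun h ↦
    ht (Int.eq_zero_of_dvd_of_natAbs_lt_natAbs ((hω.zpow_eq_one_iff_dvd t).1 h) (by simpa))
  have hζn : ζ ^ n = 1 := by
    rw [← zpow_natCast, ← _root_.zpow_mul, mul_comm t, _root_.zpow_mul, zpow_natCast,
      hω.pow_eq_one, _root_.one_zpow]
  calc ∑ j ∈ range n, Complex.exp (t * ↑(β + 2 * π * j / n) * Complex.I)
      = Complex.exp (t * β * Complex.I) * ∑ j ∈ range n, ζ ^ j := by
        rw [mul_sum]
        refine sum_congr rfl fun j _ ↦ ?_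
        rw [← zpow_natCast, ← _root_.zpow_mul, ← Complex.exp_int_mul, ← Complex.exp_add]
        congr 1
        push_cast
        ring
    _ = 0 := by rw [geom_sum_eq hζ1, hζn, sub_self, zero_div, mul_zero]

theorem cos_pow_eq_sum_exp (p : ℕ) (x : ℝ) :
    (cos x : ℂ) ^ p = (∑ r ∈ range (p + 1),
      (p.choose r : ℂ) * Complex.exp (((2 * r - p : ℤ) : ℂ) * x * Complex.I)) / 2 ^ p := by
  rw [Complex.ofReal_cos, Complex.cos, div_pow, add_pow]
  congr 1
  refine sum_congr rfl fun r hr ↦ ?_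
  have hrp : r ≤ p := Nat.lt_succ_iff.mp (mem_range.mp hr)
  rw [← Complex.exp_nat_mul, ← Complex.exp_nat_mul, ← Complex.exp_add, mul_comm]
  congr 2
  push_cast [hrp]
  ring

theorem sum_cos_pow_two_mul_equally_spaced {m n : ℕ} (hmn : 2 * m < n) (β : ℝ) :
    ∑ j ∈ range n, cos (β + 2 * π * j / n) ^ (2 * m) = n * m.centralBinom / 4 ^ m := by
  apply Complex.ofReal_injective
  simp only [Complex.ofReal_sum, Complex.ofReal_pow, cos_pow_eq_sum_exp]
  rw [← sum_div, sum_comm]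
  simp_rw [← mul_sum]
  rw [sum_eq_single m]
  · rw [sum_exp_int_mul_equally_spaced (by omega)]
    push_cast [Nat.centralBinom_eq_two_mul_choose]
    rw [if_pos (by ring), pow_mul, mul_comm]
    norm_num
  · intro r hr hrm
    have hr' := mem_range.mp hr
    rw [sum_exp_int_mul_equally_spaced (by omega), if_neg (by omega), mul_zero]
  · exact fun h ↦ (h (mem_range.mpr (by omega))).elim

theorem sum_cos_pow_mul_sin_equally_spaced {m n : ℕ} (hmn : 2 * (m + 1) < n) (β : ℝ) :
    ∑ j ∈ range n, cos (β + 2 * π * j / n) ^ (2 * m + 1) * sin (β + 2 * π * j / n) = 0 := by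
  have hderiv : HasDerivAt (fun b ↦ ∑ j ∈ range n, cos (b + 2 * π * j / n) ^ (2 * (m + 1)))
      (∑ j ∈ range n, -(2 * (m + 1) : ℝ) *
        (cos (β + 2 * π * j / n) ^ (2 * m + 1) * sin (β + 2 * π * j / n))) β := by
    refine HasDerivAt.fun_sum fun j _ ↦ ?_
    have hcos := ((hasDerivAt_id' β).add_const (2 * π * j / n)).cos
    refine (hcos.fun_pow (2 * (m + 1))).congr_deriv ?_
    rw [show 2 * (m + 1) - 1 = 2 * m + 1 by omega]
    push_cast
    ring
  have hconst : (fun b ↦ ∑ j ∈ range n, cos (b + 2 * π * j / n) ^ (2 * (m + 1))) =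
      fun _ ↦ (n * (m + 1).centralBinom / 4 ^ (m + 1) : ℝ) :=
    funext fun b ↦ sum_cos_pow_two_mul_equally_spaced hmn b
  rw [hconst, ← mul_sum] at hderiv
  have h := (hasDerivAt_const β _).unique hderiv
  exact (mul_eq_zero.mp h.symm).resolve_left (neg_ne_zero.mpr (by positivity))

theorem sum_cos_pow_two_mul_succ_equally_spaced {m n : ℕ} (hmn : 2 * (m + 1) < n) (β : ℝ) :
    ∑ j ∈ range n, cos (β + 2 * π * j / n) ^ (2 * (m + 1)) =
      (2 * m + 1) / (2 * m + 2) * ∑ j ∈ range n, cos (β + 2 * π * j / n) ^ (2 * m) := by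
  rw [sum_cos_pow_two_mul_equally_spaced hmn, sum_cos_pow_two_mul_equally_spaced (by omega)]
  have h : ((m + 1 : ℕ) : ℝ) * (m + 1).centralBinom = 2 * (2 * m + 1) * m.centralBinom := by
    exact_mod_cast Nat.succ_mul_centralBinom_succ m
  field_simp
  rw [pow_succ]
  push_cast at h
  linear_combination 2 * (4:ℝ) ^ m * n * h

theorem sum_cos_pow_mul_quadratic_equally_spaced {m n : ℕ} (hmn : 2 * (m + 1) < n)
    (β P Q R : ℝ) :
    ∑ j ∈ range n, cos (β + 2 * π * j / n) ^ (2 * m) *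
        (cos (β + 2 * π * j / n) ^ 2 * P + sin (β + 2 * π * j / n) ^ 2 * Q +
          cos (β + 2 * π * j / n) * sin (β + 2 * π * j / n) * R) =
      ((2 * m + 1) * P + Q) / (2 * m + 2) *
        ∑ j ∈ range n, cos (β + 2 * π * j / n) ^ (2 * m) := by
  have hsummand : ∀ x : ℝ,
      cos x ^ (2 * m) * (cos x ^ 2 * P + sin x ^ 2 * Q + cos x * sin x * R) =
        (P - Q) * cos x ^ (2 * (m + 1)) + Q * cos x ^ (2 * m) +
          R * (cos x ^ (2 * m + 1) * sin x) := by
    intro x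
    rw [sin_sq]
    ring
  simp only [hsummand, sum_add_distrib, ← mul_sum]
  rw [sum_cos_pow_two_mul_succ_equally_spaced hmn, sum_cos_pow_mul_sin_equally_spaced hmn]
  field_simp
  ring

noncomputable def unitVec (θ : ℝ) : Fin 2 → ℝ := ![cos θ, sin θ]

theorem unitVec_dotProduct_unitVec (a b : ℝ) : unitVec a ⬝ᵥ unitVec b = cos (b - a) := by
  rw [cos_sub, unitVec, unitVec, dotProduct, Fin.sum_univ_two]
  simp only [cons_val_zero, cons_val_one, cons_val_fin_one]
  ring

theorem unitVec_add (ψ φ : ℝ) :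
    unitVec (ψ + φ) = cos ψ • unitVec φ + sin ψ • unitVec (φ + π / 2) := by
  rw [unitVec, unitVec, unitVec, cos_add_pi_div_two, sin_add_pi_div_two, cos_add, sin_add]
  simp only [smul_cons, smul_eq_mul, Matrix.smul_empty, cons_add_cons, empty_add_empty]
  congr 2 <;> ring

theorem exists_unitVec_eq {u : Fin 2 → ℝ} (hu : u ⬝ᵥ u = 1) : ∃ φ, unitVec φ = u := by
  have hz : ‖(⟨u 0, u 1⟩ : ℂ)‖ = 1 := by
    simpa [Complex.norm_def, Complex.normSq_mk, dotProduct, Fin.sum_univ_two] using hu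
  obtain ⟨φ, hφ⟩ := (Complex.norm_eq_one_iff _).1 hz
  refine ⟨φ, ?_⟩
  ext i
  fin_cases i
  · simpa [unitVec] using congrArg Complex.re hφ
  · simpa [unitVec] using congrArg Complex.im hφ

theorem trace_eq_unitVec_add_unitVec (A : Matrix (Fin 2) (Fin 2) ℝ) (φ : ℝ) :
    A.trace = A *ᵥ unitVec φ ⬝ᵥ unitVec φ +
      A *ᵥ unitVec (φ + π / 2) ⬝ᵥ unitVec (φ + π / 2) := by
  rw [unitVec, unitVec, cos_add_pi_div_two, sin_add_pi_div_two, trace_fin_two]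
  simp only [mulVec, dotProduct, Fin.sum_univ_two, cons_val_zero, cons_val_one, cons_val_fin_one]
  linear_combination (A 0 0 + A 1 1) * (sin_sq_add_cos_sq φ).symm

theorem mulVec_smul_add_smul_dotProduct {ι R : Type*} [Fintype ι] [CommRing R]
    (A : Matrix ι ι R) (u v : ι → R) (c s : R) :
    A *ᵥ (c • u + s • v) ⬝ᵥ (c • u + s • v) =
      c ^ 2 * (A *ᵥ u ⬝ᵥ u) + s ^ 2 * (A *ᵥ v ⬝ᵥ v) +
        c * s * (A *ᵥ u ⬝ᵥ v + A *ᵥ v ⬝ᵥ u) := by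
  simp only [mulVec_add, mulVec_smul, add_dotProduct, dotProduct_add, smul_dotProduct,
    dotProduct_smul, smul_eq_mul]
  ring

theorem mulVec_unitVec_add_dotProduct (A : Matrix (Fin 2) (Fin 2) ℝ) (ψ φ : ℝ) :
    A *ᵥ unitVec (ψ + φ) ⬝ᵥ unitVec (ψ + φ) =
      cos ψ ^ 2 * (A *ᵥ unitVec φ ⬝ᵥ unitVec φ) +
        sin ψ ^ 2 * (A *ᵥ unitVec (φ + π / 2) ⬝ᵥ unitVec (φ + π / 2)) +
        cos ψ * sin ψ * (A *ᵥ unitVec φ ⬝ᵥ unitVec (φ + π / 2) +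
          A *ᵥ unitVec (φ + π / 2) ⬝ᵥ unitVec φ) := by
  rw [unitVec_add, mulVec_smul_add_smul_dotProduct]

theorem polygon_averaging_set_general (k : ℕ) (hk : 1 ≤ k) (α : ℝ)
    (η : ℕ → Fin 2 → ℝ)
    (hη : ∀ j : ℕ, η j =
      ![Real.cos (α + 2 * Real.pi * j / (2 * k + 2)),
        Real.sin (α + 2 * Real.pi * j / (2 * k + 2))])
    (u : Fin 2 → ℝ) (hu : u ⬝ᵥ u = 1)
    (A : Matrix (Fin 2) (Fin 2) ℝ) :
    (0 < ∑ j ∈ Finset.range (2 * k + 2), (u ⬝ᵥ η j) ^ (2 * k - 2)) ∧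
    (∑ j ∈ Finset.range (2 * k + 2), (u ⬝ᵥ η j) ^ (2 * k - 2) * (A.mulVec (η j) ⬝ᵥ η j)) /
        (∑ j ∈ Finset.range (2 * k + 2), (u ⬝ᵥ η j) ^ (2 * k - 2)) =
      (1 / (2 * (k : ℝ))) * Matrix.trace A +
        ((2 * (k : ℝ) - 2) / (2 * (k : ℝ))) * (A.mulVec u ⬝ᵥ u) := by
  obtain ⟨m, rfl⟩ : ∃ m, k = m + 1 := ⟨k - 1, by omega⟩
  obtain ⟨φ, rfl⟩ := exists_unitVec_eq hu
  set n := 2 * (m + 1) + 2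
  set θ : ℕ → ℝ := fun j ↦ α - φ + 2 * π * j / n
  have hηθ : ∀ j, η j = unitVec (θ j + φ) := by
    intro j
    have hangle : α + 2 * π * j / (2 * ((m + 1 : ℕ) : ℝ) + 2) = θ j + φ := by
      simp only [θ, n]
      push_cast
      ring
    rw [hη, hangle, unitVec]
  have hweight : ∀ j, unitVec φ ⬝ᵥ η j = cos (θ j) := by
    intro j
    rw [hηθ, unitVec_dotProduct_unitVec, add_sub_cancel_right]
  have hS0 : 0 < ∑ j ∈ range n, cos (θ j) ^ (2 * m) := by
    rw [sum_cos_pow_two_mul_equally_spaced (by omega)]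
    have := Nat.centralBinom_pos m
    positivity
  rw [show 2 * (m + 1) - 2 = 2 * m by omega]
  simp only [hweight]
  simp only [hηθ, mulVec_unitVec_add_dotProduct A _ φ]
  refine ⟨hS0, ?_⟩
  rw [sum_cos_pow_mul_quadratic_equally_spaced (by omega),
    trace_eq_unitVec_add_unitVec A φ]
  field_simp
  push_cast
  ring

/-- The `2k+2` equally spaced unit vectors of a regular `(2k+2)`-gon form a `2k`-averaging
set in the plane: for every unit vector `u` and symmetric matrix `A`,
`(∑ⱼ ⟨u,ηⱼ⟩^{2k-2} ⟨Aηⱼ,ηⱼ⟩) / (∑ⱼ ⟨u,ηⱼ⟩^{2k-2}) = (1/(2k)) tr A + ((2k-2)/(2k)) ⟨Au,u⟩`. -/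
theorem polygon_averaging_set (k : ℕ) (hk : 1 ≤ k) (α : ℝ)
    (η : ℕ → Fin 2 → ℝ)
    (hη : ∀ j : ℕ, η j =
      ![Real.cos (α + 2 * Real.pi * j / (2 * k + 2)),
        Real.sin (α + 2 * Real.pi * j / (2 * k + 2))])
    (u : Fin 2 → ℝ) (hu : u ⬝ᵥ u = 1)
    (A : Matrix (Fin 2) (Fin 2) ℝ) (hA : A.IsSymm) :
    (0 < ∑ j ∈ Finset.range (2 * k + 2), (u ⬝ᵥ η j) ^ (2 * k - 2)) ∧
    (∑ j ∈ Finset.range (2 * k + 2), (u ⬝ᵥ η j) ^ (2 * k - 2) * (A.mulVec (η j) ⬝ᵥ η j)) /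
        (∑ j ∈ Finset.range (2 * k + 2), (u ⬝ᵥ η j) ^ (2 * k - 2)) =
      (1 / (2 * (k : ℝ))) * Matrix.trace A +
        ((2 * (k : ℝ) - 2) / (2 * (k : ℝ))) * (A.mulVec u ⬝ᵥ u) :=
  polygon_averaging_set_general k hk α η hη u hu A
end

section
/- Let k ≥ 1, let r be an integer with 1 ≤ r ≤ k, and let a ∈ ℝ. Then Σ_{j=0}^{2k+1} cos^{2r}( a + j·(2π/(2k+2)) ) = (2k+2) · (1/2^{2r}) · C(2r, r), where C(2r, r) is the central binomial coefficient. -/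
/-!
Write `cos θ = (z + z⁻¹) / 2` with `z = exp (θ i)`. Expanding the `2r`-th power gives the Laurent
monomials `z ^ (2m - 2r)`; along `N` equally spaced angles, `z` runs over `exp (a i)` times the
`N`-th roots of unity, and for a primitive root `ζ` the sum of `(ζ ^ n) ^ j` over `j < N` vanishes
unless `N ∣ n`.
As `|2m - 2r| ≤ 2r < N`, only the constant term `m = r` survives.
-/

open Finset

theorem IsPrimitiveRoot.sum_range_zpow_pow {K : Type*} [Field K] {ζ : K} {N : ℕ}
    (hζ : IsPrimitiveRoot ζ N) (n : ℤ) :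
    ∑ j ∈ range N, (ζ ^ n) ^ j = if (N : ℤ) ∣ n then (N : K) else 0 := by
  split_ifs with hdvd
  · simp [(hζ.zpow_eq_one_iff_dvd n).mpr hdvd]
  · have hne : ζ ^ n ≠ 1 := mt (hζ.zpow_eq_one_iff_dvd n).mp hdvd
    have hpow : (ζ ^ n) ^ N = 1 := by
      rw [← zpow_natCast, ← zpow_mul, mul_comm, zpow_mul, zpow_natCast, hζ.pow_eq_one, one_zpow]
    rw [geom_sum_eq hne, hpow, sub_self, zero_div]

theorem add_inv_pow_eq_sum {K : Type*} [Field K] {z : K} (hz : z ≠ 0) (n : ℕ) :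
    (z + z⁻¹) ^ n = ∑ m ∈ range (n + 1), (n.choose m : K) * z ^ (2 * (m : ℤ) - n) := by
  rw [add_pow]
  refine sum_congr rfl fun m hm => ?_
  have hmn : m ≤ n := Nat.lt_succ_iff.mp (mem_range.mp hm)
  rw [mul_comm, ← zpow_natCast, ← zpow_natCast, inv_zpow', ← zpow_add₀ hz]
  congr 2
  push_cast [hmn]
  ring

theorem Complex.sum_cos_add_mul_two_pi_div_pow_two_mul {N r : ℕ} (hrN : 2 * r < N) (a : ℂ) :
    ∑ j ∈ range N, cos (a + j * (2 * Real.pi / N)) ^ (2 * r)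
      = N * (2 * r).choose r / 2 ^ (2 * r) := by
  set ζ := exp (2 * Real.pi * I / N)
  have hζ : IsPrimitiveRoot ζ N := isPrimitiveRoot_exp N (by omega)
  set w := exp (a * I)
  have hcos (j : ℕ) : cos (a + j * (2 * Real.pi / N)) = (w * ζ ^ j + (w * ζ ^ j)⁻¹) / 2 := by
    rw [cos, ← exp_nat_mul, ← exp_add, ← exp_neg]
    congr 3 <;> ring
  have hdvd {m : ℕ} (hm : m ∈ range (2 * r + 1)) : (N : ℤ) ∣ 2 * (m : ℤ) - (2 * r : ℕ) ↔ m = r := by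
    have := mem_range.mp hm
    refine ⟨fun h => ?_, fun h => by simp [h]⟩
    have := Int.eq_zero_of_abs_lt_dvd h (by rw [abs_lt]; push_cast; omega)
    omega
  calc ∑ j ∈ range N, cos (a + j * (2 * Real.pi / N)) ^ (2 * r)
      = ∑ j ∈ range N, ∑ m ∈ range (2 * r + 1),
          ((2 * r).choose m : ℂ) * w ^ (2 * (m : ℤ) - (2 * r : ℕ)) *
            (ζ ^ (2 * (m : ℤ) - (2 * r : ℕ))) ^ j / 2 ^ (2 * r) := by
        refine sum_congr rfl fun j _ => ?_
        rw [hcos, div_pow, add_inv_pow_eq_sum (by simp [w, ζ]), sum_div]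
        refine sum_congr rfl fun m _ => ?_
        rw [mul_zpow, ← zpow_natCast, ← zpow_mul, mul_comm (j : ℤ), zpow_mul, zpow_natCast, mul_assoc]
    _ = ∑ m ∈ range (2 * r + 1), ((2 * r).choose m : ℂ) * w ^ (2 * (m : ℤ) - (2 * r : ℕ)) *
          (if m = r then (N : ℂ) else 0) / 2 ^ (2 * r) := by
        rw [sum_comm]
        refine sum_congr rfl fun m hm => ?_
        rw [← sum_div, ← mul_sum, hζ.sum_range_zpow_pow, if_congr (hdvd hm) rfl rfl]
    _ = N * (2 * r).choose r / 2 ^ (2 * r) := by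
        simp only [mul_ite, mul_zero, ite_div, zero_div, sum_ite_eq', mem_range,
          if_pos (Nat.lt_succ_of_le (Nat.le_mul_of_pos_left r two_pos))]
        simp only [Nat.cast_mul, Nat.cast_ofNat, sub_self, zpow_zero, mul_one]
        ring

theorem sum_cos_even_pow_arith_prog_general (k r : ℕ) (hrk : r ≤ k) (a : ℝ) :
    ∑ j ∈ Finset.range (2 * k + 2),
        Real.cos (a + j * (2 * Real.pi / (2 * k + 2))) ^ (2 * r)
      = (2 * (k : ℝ) + 2) * (1 / 2 ^ (2 * r)) * (Nat.choose (2 * r) r : ℝ) := by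
  have h := Complex.sum_cos_add_mul_two_pi_div_pow_two_mul (N := 2 * k + 2) (r := r) (by omega) a
  push_cast at h
  apply Complex.ofReal_injective
  push_cast
  rw [h]
  ring

/-- Sum of even powers of cosines over `2k+2` equally spaced angles: for `1 ≤ r ≤ k`,
`∑_{j=0}^{2k+1} cos^{2r}(a + 2πj/(2k+2)) = (2k+2) · 2^{-2r} · C(2r, r)`. -/
theorem sum_cos_even_pow_arith_prog (k r : ℕ) (hr1 : 1 ≤ r) (hrk : r ≤ k) (a : ℝ) :
    ∑ j ∈ Finset.range (2 * k + 2),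
        Real.cos (a + j * (2 * Real.pi / (2 * k + 2))) ^ (2 * r)
      = (2 * (k : ℝ) + 2) * (1 / 2 ^ (2 * r)) * (Nat.choose (2 * r) r : ℝ) :=
  sum_cos_even_pow_arith_prog_general k r hrk a
end

section
/- Let φ = (1 + √5)/2 be the golden ratio and let J ⊂ ℝ³ be the 12 vertices of the icosahedron, J = { (0, ±1, ±φ), (±1, ±φ, 0), (±φ, 0, ±1) } (all sign choices). Then for every unit vector u ∈ ℝ³ and every symmetric 3×3 real matrix A: (i) Σ_{η ∈ J} ⟨u, η⟩² = 4 + 4φ²; (ii) Σ_{η ∈ J} ⟨u, η⟩² ⟨A η, η⟩ = 8φ²·⟨A u, u⟩ + 4φ²·tr(A). Consequently the ratio (ii)/(i) equals (4φ²/(4+4φ²))·(2⟨Au,u⟩ + tr(A)), so J is a 4-averaging set in ℝ³. -/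
/-!
The second and fourth moment tensors of the icosahedron vertices are isotropic:
`∑ η_i η_j = (4 + 4φ²) δ_ij` and `∑ η_i η_j η_k η_l = 4φ² (δ_ij δ_kl + δ_ik δ_jl + δ_il δ_jk)`.
Off-diagonal entries vanish by the sign symmetries, and the diagonal fourth moment
`4 + 4φ⁴ = 12φ²` is the identity `φ⁴ = 3φ² - 1`, a consequence of `φ² = φ + 1`.
Both sums in the theorem are contractions of these tensors, with `u ⊗ u` and with `u ⊗ u ⊗ A`.
-/

open Matrix Finset

section Moments

variable {ι n : Type*} [Fintype ι] [Fintype n]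

lemma dotProduct_sq_eq_sum (u v : n → ℝ) :
    (u ⬝ᵥ v) ^ 2 = ∑ i, ∑ j, u i * u j * (v i * v j) := by
  rw [sq, dotProduct, sum_mul_sum]
  exact sum_congr rfl fun i _ => sum_congr rfl fun j _ => by ring

lemma mulVec_dotProduct_eq_sum (A : Matrix n n ℝ) (v : n → ℝ) :
    A *ᵥ v ⬝ᵥ v = ∑ k, ∑ l, A k l * (v k * v l) := by
  simp only [dotProduct, mulVec, sum_mul]
  exact sum_congr rfl fun k _ => sum_congr rfl fun l _ => by ring

lemma dotProduct_sq_mul_mulVec_dotProduct_eq_sum (u v : n → ℝ) (A : Matrix n n ℝ) :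
    (u ⬝ᵥ v) ^ 2 * (A *ᵥ v ⬝ᵥ v) =
      ∑ i, ∑ j, ∑ k, ∑ l, u i * u j * A k l * (v i * v j * v k * v l) := by
  rw [dotProduct_sq_eq_sum, mulVec_dotProduct_eq_sum, sum_mul_sum]
  refine sum_congr rfl fun i _ => ?_
  simp_rw [sum_mul_sum]
  rw [sum_comm]
  exact sum_congr rfl fun j _ => sum_congr rfl fun k _ => sum_congr rfl fun l _ => by ring

variable [DecidableEq n]

lemma sum_dotProduct_sq_eq_of_second_moment (η : ι → n → ℝ) (b : ℝ)
    (h : ∀ i j, ∑ m, η m i * η m j = if i = j then b else 0) (u : n → ℝ) :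
    ∑ m, (u ⬝ᵥ η m) ^ 2 = b * (u ⬝ᵥ u) := by
  calc ∑ m, (u ⬝ᵥ η m) ^ 2 = ∑ i, ∑ j, u i * u j * ∑ m, η m i * η m j := by
        simp_rw [dotProduct_sq_eq_sum, mul_sum]
        rw [sum_comm]
        exact sum_congr rfl fun i _ => sum_comm
    _ = b * (u ⬝ᵥ u) := by
        simp only [h, mul_ite, mul_zero, sum_ite_eq, mem_univ, ↓reduceIte, dotProduct, mul_sum]
        exact sum_congr rfl fun i _ => by ring

lemma sum_dotProduct_sq_mul_eq_of_fourth_moment (η : ι → n → ℝ) (c : ℝ)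
    (h : ∀ i j k l, ∑ m, η m i * η m j * η m k * η m l =
      c * ((if i = j ∧ k = l then 1 else 0) + (if i = k ∧ j = l then 1 else 0) +
        (if i = l ∧ j = k then 1 else 0)))
    (u : n → ℝ) (A : Matrix n n ℝ) :
    ∑ m, (u ⬝ᵥ η m) ^ 2 * (A *ᵥ η m ⬝ᵥ η m) = c * ((u ⬝ᵥ u) * trace A + 2 * (A *ᵥ u ⬝ᵥ u)) := by
  calc ∑ m, (u ⬝ᵥ η m) ^ 2 * (A *ᵥ η m ⬝ᵥ η m)
      = ∑ i, ∑ j, ∑ k, ∑ l, u i * u j * A k l * ∑ m, η m i * η m j * η m k * η m l := by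
        simp_rw [dotProduct_sq_mul_mulVec_dotProduct_eq_sum, mul_sum]
        rw [sum_comm]
        refine sum_congr rfl fun i _ => ?_
        rw [sum_comm]
        refine sum_congr rfl fun j _ => ?_
        rw [sum_comm]
        exact sum_congr rfl fun k _ => sum_comm
    _ = c * ((u ⬝ᵥ u) * trace A + 2 * (A *ᵥ u ⬝ᵥ u)) := by
        have htrace : (u ⬝ᵥ u) * trace A = ∑ i, ∑ k, u i * u i * A k k := by
          simp only [dotProduct, trace, Matrix.diag, sum_mul_sum]
        have hquad : A *ᵥ u ⬝ᵥ u = ∑ i, ∑ j, u i * u j * A i j := by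
          rw [mulVec_dotProduct_eq_sum]
          exact sum_congr rfl fun i _ => sum_congr rfl fun j _ => by ring
        have hswap : ∑ i, ∑ j, u i * u j * A j i = ∑ i, ∑ j, u i * u j * A i j := by
          rw [sum_comm]
          exact sum_congr rfl fun i _ => sum_congr rfl fun j _ => by ring
        simp only [h, ite_and, mul_add, mul_ite, mul_one, mul_zero, sum_add_distrib, sum_ite_irrel,
          sum_ite_eq, mem_univ, ↓reduceIte, sum_const_zero, ← sum_mul]
        rw [htrace, hquad]
        linear_combination c * hswap

end Moments

def icosahedronVertices (φ : ℝ) : Fin 12 → Fin 3 → ℝ :=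
  ![![0, 1, φ], ![0, 1, -φ], ![0, -1, φ], ![0, -1, -φ],
    ![1, φ, 0], ![1, -φ, 0], ![-1, φ, 0], ![-1, -φ, 0],
    ![φ, 0, 1], ![φ, 0, -1], ![-φ, 0, 1], ![-φ, 0, -1]]

lemma icosahedronVertices_second_moment (φ : ℝ) (i j : Fin 3) :
    ∑ m, icosahedronVertices φ m i * icosahedronVertices φ m j =
      if i = j then 4 + 4 * φ ^ 2 else 0 := by
  fin_cases i <;> fin_cases j <;> simp [icosahedronVertices, Fin.sum_univ_succ] <;> ring

lemma icosahedronVertices_fourth_moment {φ : ℝ} (hφ : φ ^ 2 = φ + 1) (i j k l : Fin 3) :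
    ∑ m, icosahedronVertices φ m i * icosahedronVertices φ m j *
        icosahedronVertices φ m k * icosahedronVertices φ m l =
      4 * φ ^ 2 * ((if i = j ∧ k = l then 1 else 0) + (if i = k ∧ j = l then 1 else 0) +
        (if i = l ∧ j = k then 1 else 0)) := by
  fin_cases i <;> fin_cases j <;> fin_cases k <;> fin_cases l <;>
    simp [icosahedronVertices, Fin.sum_univ_succ] <;>
    first | ring1 | linear_combination 4 * (φ ^ 2 + φ - 1) * hφ

theorem icosahedron_four_averaging_general (gr : ℝ) (hgr : gr = (1 + Real.sqrt 5) / 2)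
    (η : Fin 12 → Fin 3 → ℝ)
    (hη : η = ![![0, 1, gr], ![0, 1, -gr], ![0, -1, gr], ![0, -1, -gr],
                ![1, gr, 0], ![1, -gr, 0], ![-1, gr, 0], ![-1, -gr, 0],
                ![gr, 0, 1], ![gr, 0, -1], ![-gr, 0, 1], ![-gr, 0, -1]])
    (u : Fin 3 → ℝ) (hu : u ⬝ᵥ u = 1)
    (A : Matrix (Fin 3) (Fin 3) ℝ) :
    (∑ j : Fin 12, (u ⬝ᵥ η j) ^ 2 = 4 + 4 * gr ^ 2) ∧
    (∑ j : Fin 12, (u ⬝ᵥ η j) ^ 2 * (A.mulVec (η j) ⬝ᵥ η j)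
      = 8 * gr ^ 2 * (A.mulVec u ⬝ᵥ u) + 4 * gr ^ 2 * Matrix.trace A) ∧
    ((∑ j : Fin 12, (u ⬝ᵥ η j) ^ 2 * (A.mulVec (η j) ⬝ᵥ η j)) /
        (∑ j : Fin 12, (u ⬝ᵥ η j) ^ 2)
      = (4 * gr ^ 2 / (4 + 4 * gr ^ 2)) * (2 * (A.mulVec u ⬝ᵥ u) + Matrix.trace A)) := by
  have hgr_sq : gr ^ 2 = gr + 1 := hgr ▸ Real.goldenRatio_sq
  have hη' : η = icosahedronVertices gr := hη
  subst hη'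
  have hsum : ∑ j, (u ⬝ᵥ icosahedronVertices gr j) ^ 2 = 4 + 4 * gr ^ 2 := by
    rw [sum_dotProduct_sq_eq_of_second_moment _ _ (icosahedronVertices_second_moment gr), hu,
      mul_one]
  have hweighted : ∑ j, (u ⬝ᵥ icosahedronVertices gr j) ^ 2 *
      (A *ᵥ icosahedronVertices gr j ⬝ᵥ icosahedronVertices gr j) =
        8 * gr ^ 2 * (A *ᵥ u ⬝ᵥ u) + 4 * gr ^ 2 * trace A := by
    rw [sum_dotProduct_sq_mul_eq_of_fourth_moment _ _ (icosahedronVertices_fourth_moment hgr_sq),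
      hu]
    ring
  refine ⟨hsum, hweighted, ?_⟩
  rw [hsum, hweighted]
  field_simp
  ring

/-- The 12 vertices of the icosahedron form a 4-averaging set in `ℝ³`: for any unit vector
`u` and symmetric matrix `A`, `∑ ⟨u,η⟩² = 4 + 4φ²`,
`∑ ⟨u,η⟩²⟨Aη,η⟩ = 8φ²⟨Au,u⟩ + 4φ² tr A`, and the ratio equals
`(4φ²/(4+4φ²))(2⟨Au,u⟩ + tr A)`, where `φ` is the golden ratio. -/
theorem icosahedron_four_averaging (gr : ℝ) (hgr : gr = (1 + Real.sqrt 5) / 2)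
    (η : Fin 12 → Fin 3 → ℝ)
    (hη : η = ![![0, 1, gr], ![0, 1, -gr], ![0, -1, gr], ![0, -1, -gr],
                ![1, gr, 0], ![1, -gr, 0], ![-1, gr, 0], ![-1, -gr, 0],
                ![gr, 0, 1], ![gr, 0, -1], ![-gr, 0, 1], ![-gr, 0, -1]])
    (u : Fin 3 → ℝ) (hu : u ⬝ᵥ u = 1)
    (A : Matrix (Fin 3) (Fin 3) ℝ) (hA : A.IsSymm) :
    (∑ j : Fin 12, (u ⬝ᵥ η j) ^ 2 = 4 + 4 * gr ^ 2) ∧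
    (∑ j : Fin 12, (u ⬝ᵥ η j) ^ 2 * (A.mulVec (η j) ⬝ᵥ η j)
      = 8 * gr ^ 2 * (A.mulVec u ⬝ᵥ u) + 4 * gr ^ 2 * Matrix.trace A) ∧
    ((∑ j : Fin 12, (u ⬝ᵥ η j) ^ 2 * (A.mulVec (η j) ⬝ᵥ η j)) /
        (∑ j : Fin 12, (u ⬝ᵥ η j) ^ 2)
      = (4 * gr ^ 2 / (4 + 4 * gr ^ 2)) * (2 * (A.mulVec u ⬝ᵥ u) + Matrix.trace A)) :=
  icosahedron_four_averaging_general gr hgr η hη u hu A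
end

section
/- Let J ⊂ ℝ⁴ be the 24 vertices of the 24-cell centered at the origin: all vectors obtained from (1,1,0,0) by permuting coordinates and choosing signs, i.e. all vectors with two coordinates equal to ±1 and two coordinates equal to 0. Then for every u ∈ ℝ⁴ and every symmetric 4×4 real matrix A: (i) Σ_{η ∈ J} ⟨u, η⟩² = 12·|u|²; (ii) Σ_{η ∈ J} ⟨u, η⟩² ⟨A η, η⟩ = 8·⟨A u, u⟩ + 4·tr(A)·|u|². In particular, for unit u the ratio (ii)/(i) equals (8/6)·( (2/4)⟨Au,u⟩ + (1/4)tr(A) ), so J is a 4-averaging set in ℝ⁴. -/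
open Matrix

/-! Both sums are traces against moment matrices of the vertex set `J`:
`∑ c_η ⟨Aη, η⟩ = tr (A ∑ c_η ηηᵀ)` and `⟨u, η⟩² = ⟨(uuᵀ)η, η⟩`.
The 24-cell has second moment `∑ ηηᵀ = 12 I` and weighted fourth moment
`∑ ⟨u, η⟩² ηηᵀ = 8 uuᵀ + 4 |u|² I`, so taking traces against `uuᵀ` and against `A`
gives the two identities. -/

def cell24Vertices : Fin 24 → Fin 4 → ℝ :=
  ![![1, 1, 0, 0], ![1, -1, 0, 0], ![-1, 1, 0, 0], ![-1, -1, 0, 0],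
    ![1, 0, 1, 0], ![1, 0, -1, 0], ![-1, 0, 1, 0], ![-1, 0, -1, 0],
    ![1, 0, 0, 1], ![1, 0, 0, -1], ![-1, 0, 0, 1], ![-1, 0, 0, -1],
    ![0, 1, 1, 0], ![0, 1, -1, 0], ![0, -1, 1, 0], ![0, -1, -1, 0],
    ![0, 1, 0, 1], ![0, 1, 0, -1], ![0, -1, 0, 1], ![0, -1, 0, -1],
    ![0, 0, 1, 1], ![0, 0, 1, -1], ![0, 0, -1, 1], ![0, 0, -1, -1]]

namespace Matrix

variable {ι n R : Type*} [Fintype ι] [Fintype n] [CommSemiring R]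

theorem trace_mul_vecMulVec_self (A : Matrix n n R) (v : n → R) :
    trace (A * vecMulVec v v) = A *ᵥ v ⬝ᵥ v := by
  rw [mul_vecMulVec, trace_vecMulVec]

theorem vecMulVec_self_mulVec_dotProduct (u v : n → R) :
    vecMulVec u u *ᵥ v ⬝ᵥ v = (u ⬝ᵥ v) ^ 2 := by
  rw [vecMulVec_mulVec, op_smul_eq_smul, smul_dotProduct, smul_eq_mul, sq]

theorem sum_mul_mulVec_dotProduct_eq_trace (A : Matrix n n R) (c : ι → R) (v : ι → n → R) :
    ∑ j, c j * (A *ᵥ v j ⬝ᵥ v j) = trace (A * ∑ j, c j • vecMulVec (v j) (v j)) := by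
  simp only [Matrix.mul_sum, Matrix.mul_smul, trace_sum, trace_smul, trace_mul_vecMulVec_self,
    smul_eq_mul]

end Matrix

theorem sum_vecMulVec_cell24Vertices :
    ∑ j, vecMulVec (cell24Vertices j) (cell24Vertices j) = (12 : ℝ) • 1 := by
  ext a b
  fin_cases a <;> fin_cases b <;>
    simp [cell24Vertices, Matrix.sum_apply, Fin.sum_univ_succ, vecMulVec_apply] <;>
    norm_num

theorem sum_sq_smul_vecMulVec_cell24Vertices (u : Fin 4 → ℝ) :
    ∑ j, (u ⬝ᵥ cell24Vertices j) ^ 2 • vecMulVec (cell24Vertices j) (cell24Vertices j) =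
      (8 : ℝ) • vecMulVec u u + (4 * (u ⬝ᵥ u)) • 1 := by
  ext a b
  fin_cases a <;> fin_cases b <;>
    simp [cell24Vertices, Matrix.sum_apply, Fin.sum_univ_succ, vecMulVec_apply, dotProduct] <;>
    ring

theorem cell24_four_averaging_general
    (η : Fin 24 → Fin 4 → ℝ)
    (hη : η = ![![1, 1, 0, 0], ![1, -1, 0, 0], ![-1, 1, 0, 0], ![-1, -1, 0, 0],
                ![1, 0, 1, 0], ![1, 0, -1, 0], ![-1, 0, 1, 0], ![-1, 0, -1, 0],
                ![1, 0, 0, 1], ![1, 0, 0, -1], ![-1, 0, 0, 1], ![-1, 0, 0, -1],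
                ![0, 1, 1, 0], ![0, 1, -1, 0], ![0, -1, 1, 0], ![0, -1, -1, 0],
                ![0, 1, 0, 1], ![0, 1, 0, -1], ![0, -1, 0, 1], ![0, -1, 0, -1],
                ![0, 0, 1, 1], ![0, 0, 1, -1], ![0, 0, -1, 1], ![0, 0, -1, -1]])
    (u : Fin 4 → ℝ)
    (A : Matrix (Fin 4) (Fin 4) ℝ) :
    (∑ j : Fin 24, (u ⬝ᵥ η j) ^ 2 = 12 * (u ⬝ᵥ u)) ∧
    (∑ j : Fin 24, (u ⬝ᵥ η j) ^ 2 * (A.mulVec (η j) ⬝ᵥ η j)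
      = 8 * (A.mulVec u ⬝ᵥ u) + 4 * Matrix.trace A * (u ⬝ᵥ u)) ∧
    (u ⬝ᵥ u = 1 →
      (∑ j : Fin 24, (u ⬝ᵥ η j) ^ 2 * (A.mulVec (η j) ⬝ᵥ η j)) /
          (∑ j : Fin 24, (u ⬝ᵥ η j) ^ 2)
        = (8 / 6) * ((2 / 4) * (A.mulVec u ⬝ᵥ u) + (1 / 4) * Matrix.trace A)) := by
  change η = cell24Vertices at hη
  subst hη
  have second_moment : ∑ j, (u ⬝ᵥ cell24Vertices j) ^ 2 = 12 * (u ⬝ᵥ u) := calc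
    _ = ∑ j, 1 * (vecMulVec u u *ᵥ cell24Vertices j ⬝ᵥ cell24Vertices j) := by
      simp only [vecMulVec_self_mulVec_dotProduct, one_mul]
    _ = 12 * (u ⬝ᵥ u) := by
      rw [sum_mul_mulVec_dotProduct_eq_trace]
      simp only [one_smul, sum_vecMulVec_cell24Vertices, Matrix.mul_smul, mul_one,
        trace_smul, trace_vecMulVec, smul_eq_mul]
  have fourth_moment : ∑ j, (u ⬝ᵥ cell24Vertices j) ^ 2 * (A *ᵥ cell24Vertices j ⬝ᵥ
      cell24Vertices j) = 8 * (A *ᵥ u ⬝ᵥ u) + 4 * trace A * (u ⬝ᵥ u) := by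
    rw [sum_mul_mulVec_dotProduct_eq_trace, sum_sq_smul_vecMulVec_cell24Vertices, Matrix.mul_add,
      Matrix.mul_smul, Matrix.mul_smul, mul_one, trace_add, trace_smul, trace_smul,
      trace_mul_vecMulVec_self, smul_eq_mul, smul_eq_mul]
    ring
  refine ⟨second_moment, fourth_moment, fun hu => ?_⟩
  rw [second_moment, fourth_moment, hu]
  ring

/-- The 24 vertices of the 24-cell (all vectors with two coordinates `±1` and two `0`)
form a 4-averaging set in `ℝ⁴`: `∑ ⟨u,η⟩² = 12|u|²`,
`∑ ⟨u,η⟩²⟨Aη,η⟩ = 8⟨Au,u⟩ + 4 tr(A) |u|²`, and for unit `u` the ratio equals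
`(8/6)((2/4)⟨Au,u⟩ + (1/4) tr A)`. -/
theorem cell24_four_averaging
    (η : Fin 24 → Fin 4 → ℝ)
    (hη : η = ![![1, 1, 0, 0], ![1, -1, 0, 0], ![-1, 1, 0, 0], ![-1, -1, 0, 0],
                ![1, 0, 1, 0], ![1, 0, -1, 0], ![-1, 0, 1, 0], ![-1, 0, -1, 0],
                ![1, 0, 0, 1], ![1, 0, 0, -1], ![-1, 0, 0, 1], ![-1, 0, 0, -1],
                ![0, 1, 1, 0], ![0, 1, -1, 0], ![0, -1, 1, 0], ![0, -1, -1, 0],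
                ![0, 1, 0, 1], ![0, 1, 0, -1], ![0, -1, 0, 1], ![0, -1, 0, -1],
                ![0, 0, 1, 1], ![0, 0, 1, -1], ![0, 0, -1, 1], ![0, 0, -1, -1]])
    (u : Fin 4 → ℝ)
    (A : Matrix (Fin 4) (Fin 4) ℝ) (hA : A.IsSymm) :
    (∑ j : Fin 24, (u ⬝ᵥ η j) ^ 2 = 12 * (u ⬝ᵥ u)) ∧
    (∑ j : Fin 24, (u ⬝ᵥ η j) ^ 2 * (A.mulVec (η j) ⬝ᵥ η j)
      = 8 * (A.mulVec u ⬝ᵥ u) + 4 * Matrix.trace A * (u ⬝ᵥ u)) ∧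
    (u ⬝ᵥ u = 1 →
      (∑ j : Fin 24, (u ⬝ᵥ η j) ^ 2 * (A.mulVec (η j) ⬝ᵥ η j)) /
          (∑ j : Fin 24, (u ⬝ᵥ η j) ^ 2)
        = (8 / 6) * ((2 / 4) * (A.mulVec u ⬝ᵥ u) + (1 / 4) * Matrix.trace A)) :=
  cell24_four_averaging_general η hη u A
end

section
/- Let c = (1 + √5)/2 and let J ⊂ ℝ⁴ be the 120 vertices of the 600-cell: all vectors (±1, ±1, ±1, ±1); all permutations of (±2, 0, 0, 0); and all even permutations of (±c, ±1, ±1/c, 0) (all sign choices). Then for every u ∈ ℝ⁴ and every symmetric 4×4 real matrix A: (i) Σ_{η ∈ J} ⟨u, η⟩² = 120·|u|²; (ii) Σ_{η ∈ J} ⟨u, η⟩² ⟨A η, η⟩ = 160·⟨A u, u⟩ + 80·tr(A)·|u|². In particular, for unit u the ratio (ii)/(i) equals (8/3)·( (2/4)⟨Au,u⟩ + (1/4)tr(A) ), so J is a 4-averaging set in ℝ⁴. -/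
open Matrix

/-- All vectors obtained from `w` by permuting coordinates (by an arbitrary permutation)
and arbitrary sign changes. -/
noncomputable def signedPerms (w : Fin 4 → ℝ) : Finset (Fin 4 → ℝ) :=
  Finset.image
    (fun x : Equiv.Perm (Fin 4) × (Fin 4 → Bool) =>
      fun i => (if x.2 i then (1 : ℝ) else -1) * w (x.1 i))
    Finset.univ

/-- All vectors obtained from `w` by an even permutation of coordinates and arbitrary
sign changes. -/
noncomputable def evenSignedPerms (w : Fin 4 → ℝ) : Finset (Fin 4 → ℝ) :=
  Finset.image
    (fun x : Equiv.Perm (Fin 4) × (Fin 4 → Bool) =>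
      fun i => (if x.2 i then (1 : ℝ) else -1) * w (x.1 i))
    ((Finset.univ.filter fun σ : Equiv.Perm (Fin 4) => Equiv.Perm.sign σ = 1) ×ˢ Finset.univ)

/-!
`J` is invariant under the group `G` of sign changes composed with even coordinate permutations
(of order `16 · 12 = 192`), so `#G • ∑_{η ∈ J} f η = ∑_{η ∈ J} ∑_{g ∈ G} f (g η)`. For
`f η = (u ⬝ᵥ η)² ⟨A η, η⟩` the inner sum is explicit: the sign changes kill every monomial with
an odd exponent, and the alternating group acts sharply 2-transitively on the coordinates. What
remains depends on `η` only through `|η|²` and `∑ i, η i ^ 4`, which are constant on each of the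
three orbits `(±1,±1,±1,±1)`, `(±2,0,0,0)`, `(±φ,±1,±φ⁻¹,0)`: `|η|² = 4` throughout, and
`∑ i, η i ^ 4 = 4, 16, 8` respectively. The total is isotropic because
`∑_{η ∈ J} ∑ i, η i ^ 4 = ½ ∑_{η ∈ J} |η|⁴`, and part (i) is part (ii) for `A = 1`.
-/

open Finset Equiv

section SignedPermute

variable {ι : Type*}

def signedPermute (x : Perm ι × (ι → Bool)) (η : ι → ℝ) : ι → ℝ :=
  fun i => (if x.2 i then (1 : ℝ) else -1) * η (x.1 i)

lemma eq_of_ite_mul_eq {b b' : Bool} {a : ℝ} (ha : a ≠ 0)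
    (h : (if b then 1 else -1) * a = (if b' then 1 else -1) * a) : b = b' := by
  cases b <;> cases b' <;>
    simp only [Bool.false_eq_true, Bool.true_eq_false, ↓reduceIte, neg_mul, one_mul] at h ⊢ <;>
    exact ha (by linarith)

lemma signedPermute_injective (x : Perm ι × (ι → Bool)) :
    Function.Injective (signedPermute x) := by
  intro η η' h
  funext j
  have := congrFun h (x.1.symm j)
  simp only [signedPermute, apply_symm_apply] at this
  split_ifs at this <;> linarith

lemma signedPermute_signedPermute (x y : Perm ι × (ι → Bool)) (η : ι → ℝ) :
    signedPermute x (signedPermute y η)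
      = signedPermute (y.1 * x.1, fun i => x.2 i == y.2 (x.1 i)) η := by
  funext i
  simp only [signedPermute, Perm.mul_apply]
  by_cases hx : x.2 i <;> by_cases hy : y.2 (x.1 i) <;> simp [hx, hy]

lemma sum_apply_signedPermute [Fintype ι] {h : ℝ → ℝ} (hh : ∀ a, h (-a) = h a)
    (x : Perm ι × (ι → Bool)) (η : ι → ℝ) : ∑ i, h (signedPermute x η i) = ∑ i, h (η i) := by
  simp only [signedPermute]
  rw [← Equiv.sum_comp x.1 (fun j => h (η j))]
  refine sum_congr rfl fun i _ => ?_
  split_ifs <;> simp [hh]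

lemma dotProduct_self_signedPermute [Fintype ι] (x : Perm ι × (ι → Bool)) (η : ι → ℝ) :
    signedPermute x η ⬝ᵥ signedPermute x η = η ⬝ᵥ η :=
  sum_apply_signedPermute (h := fun a => a * a) (fun a => neg_mul_neg a a) x η

lemma sum_pow_four_signedPermute [Fintype ι] (x : Perm ι × (ι → Bool)) (η : ι → ℝ) :
    ∑ i, signedPermute x η i ^ 4 = ∑ i, η i ^ 4 :=
  sum_apply_signedPermute (fun a => Even.neg_pow (by decide) a) x η

lemma sum_comp_signedPermute {M : Type*} [AddCommMonoid M] {J : Finset (ι → ℝ)}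
    {x : Perm ι × (ι → Bool)} (hJ : ∀ η ∈ J, signedPermute x η ∈ J) (f : (ι → ℝ) → M) :
    ∑ η ∈ J, f (signedPermute x η) = ∑ η ∈ J, f η := by
  classical
  have hinj := signedPermute_injective x
  have himage : J.image (signedPermute x) = J :=
    eq_of_subset_of_card_le (image_subset_iff.2 hJ) (card_image_of_injective J hinj).ge
  rw [← sum_image hinj.injOn, himage]

lemma card_smul_sum_eq_sum_sum_signedPermute {M : Type*} [AddCommMonoid M]
    {J : Finset (ι → ℝ)} {G : Finset (Perm ι × (ι → Bool))}
    (hJ : ∀ x ∈ G, ∀ η ∈ J, signedPermute x η ∈ J) (f : (ι → ℝ) → M) :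
    #G • ∑ η ∈ J, f η = ∑ η ∈ J, ∑ x ∈ G, f (signedPermute x η) := by
  rw [sum_comm, ← sum_const]
  exact sum_congr rfl fun x hx => (sum_comp_signedPermute (hJ x hx) f).symm

def evenSignedPermSet (ι : Type*) [Fintype ι] [DecidableEq ι] : Finset (Perm ι × (ι → Bool)) :=
  univ.filter (fun σ : Perm ι => Perm.sign σ = 1) ×ˢ univ

end SignedPermute

section Orbits

lemma signedPerms_eq_image (w : Fin 4 → ℝ) : signedPerms w = univ.image (signedPermute · w) :=
  rfl

lemma evenSignedPerms_eq_image (w : Fin 4 → ℝ) :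
    evenSignedPerms w = (evenSignedPermSet (Fin 4)).image (signedPermute · w) :=
  rfl

variable {w η : Fin 4 → ℝ}

lemma signedPermute_mem_signedPerms (x : Perm (Fin 4) × (Fin 4 → Bool))
    (hη : η ∈ signedPerms w) : signedPermute x η ∈ signedPerms w := by
  rw [signedPerms_eq_image] at hη ⊢
  obtain ⟨y, -, rfl⟩ := mem_image.1 hη
  rw [signedPermute_signedPermute]
  exact mem_image_of_mem _ (mem_univ _)

lemma signedPermute_mem_evenSignedPerms {x : Perm (Fin 4) × (Fin 4 → Bool)}
    (hx : x ∈ evenSignedPermSet (Fin 4)) (hη : η ∈ evenSignedPerms w) :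
    signedPermute x η ∈ evenSignedPerms w := by
  rw [evenSignedPerms_eq_image] at hη ⊢
  obtain ⟨y, hy, rfl⟩ := mem_image.1 hη
  rw [signedPermute_signedPermute]
  refine mem_image_of_mem _ ?_
  simp only [evenSignedPermSet, mem_product, mem_filter, mem_univ, true_and, and_true] at hx hy ⊢
  rw [Perm.sign_mul, hx, hy, mul_one]

variable {g : (Fin 4 → ℝ) → ℝ}

lemma apply_eq_of_mem_signedPerms (hg : ∀ x η, g (signedPermute x η) = g η)
    (hη : η ∈ signedPerms w) : g η = g w := by
  obtain ⟨x, -, rfl⟩ := mem_image.1 hη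
  exact hg x w

lemma apply_eq_of_mem_evenSignedPerms (hg : ∀ x η, g (signedPermute x η) = g η)
    (hη : η ∈ evenSignedPerms w) : g η = g w := by
  obtain ⟨x, -, rfl⟩ := mem_image.1 hη
  exact hg x w

end Orbits

section Cardinalities

lemma card_signedPerms_of_forall_eq {w : Fin 4 → ℝ} {a : ℝ} (hw : ∀ i, w i = a) (ha : a ≠ 0) :
    #(signedPerms w) = 16 := by
  have himage : signedPerms w = univ.image fun ε => signedPermute (1, ε) w := by
    ext η
    simp only [signedPerms_eq_image, mem_image, mem_univ, true_and, Prod.exists]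
    constructor
    · rintro ⟨σ, ε, rfl⟩
      exact ⟨ε, funext fun i => by simp [signedPermute, hw]⟩
    · rintro ⟨ε, rfl⟩
      exact ⟨1, ε, rfl⟩
  have hinj : Function.Injective fun ε : Fin 4 → Bool => signedPermute (1, ε) w := by
    intro ε ε' h
    funext i
    have := congrFun h i
    simp only [signedPermute, hw] at this
    exact eq_of_ite_mul_eq ha this
  rw [himage, card_image_of_injective _ hinj]
  rfl

lemma signedPermute_single (x : Perm (Fin 4) × (Fin 4 → Bool)) (a : ℝ) :
    signedPermute x (Pi.single 0 a)
      = Pi.single (x.1.symm 0) ((if x.2 (x.1.symm 0) then 1 else -1) * a) := by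
  funext i
  by_cases hi : i = x.1.symm 0
  · subst hi; simp [signedPermute]
  · have : x.1 i ≠ 0 := fun h => hi (by rw [← h, symm_apply_apply])
    simp [signedPermute, hi, this]

lemma card_signedPerms_single {a : ℝ} (ha : a ≠ 0) : #(signedPerms (Pi.single 0 a)) = 8 := by
  set f : Fin 4 × Bool → Fin 4 → ℝ := fun p => Pi.single p.1 ((if p.2 then 1 else -1) * a)
  have himage : signedPerms (Pi.single 0 a) = univ.image f := by
    have hsurj : Function.Surjective
        fun x : Perm (Fin 4) × (Fin 4 → Bool) => (x.1.symm 0, x.2 (x.1.symm 0)) :=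
      fun p => ⟨(swap 0 p.1, fun _ => p.2), by simp⟩
    rw [signedPerms_eq_image, ← image_univ_of_surjective hsurj, image_image]
    exact image_congr fun x _ => signedPermute_single x a
  have hinj : Function.Injective f := by
    rintro ⟨j, s⟩ ⟨j', s'⟩ h
    have := congrFun h j
    by_cases hj : j = j'
    · subst hj
      simp only [f, Pi.single_eq_same] at this
      rw [eq_of_ite_mul_eq ha this]
    · by_cases h1 : s <;> simp_all [f]
  rw [himage, card_image_of_injective _ hinj]
  rfl

lemma evenSignedPerms_eq_image_of_apply_three_eq_zero {w : Fin 4 → ℝ} (hw3 : w 3 = 0) :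
    evenSignedPerms w = (univ.filter (fun σ : Perm (Fin 4) => Perm.sign σ = 1) ×ˢ
      univ.filter (fun b : Fin 4 → Bool => b 3 = true)).image
        fun x => signedPermute (x.1, fun i => x.2 (x.1 i)) w := by
  ext η
  simp only [evenSignedPerms_eq_image, evenSignedPermSet, mem_image, mem_product, mem_filter,
    mem_univ, true_and, and_true, Prod.exists]
  constructor
  · rintro ⟨σ, ε, hσ, rfl⟩
    refine ⟨σ, fun j => if j = 3 then true else ε (σ.symm j), ⟨hσ, rfl⟩, funext fun i => ?_⟩
    by_cases hi : σ i = 3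
    · simp [signedPermute, hi, hw3]
    · simp [signedPermute, hi]
  · rintro ⟨σ, b, ⟨hσ, -⟩, rfl⟩
    exact ⟨σ, fun i => b (σ i), hσ, rfl⟩

lemma card_evenSignedPerms {w : Fin 4 → ℝ} (hw : Function.Injective w) (hw0 : ∀ i, 0 ≤ w i)
    (hw3 : w 3 = 0) : #(evenSignedPerms w) = 96 := by
  rw [evenSignedPerms_eq_image_of_apply_three_eq_zero hw3, card_image_of_injOn, card_product]
  · rfl
  rintro ⟨σ, b⟩ hb ⟨σ', b'⟩ hb' h
  simp only [coe_product, coe_filter, mem_univ, true_and, Set.mem_prod, Set.mem_ofPred_eq]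
    at hb hb'
  have hcoord : ∀ i, (if b (σ i) then 1 else -1) * w (σ i)
      = (if b' (σ' i) then 1 else -1) * w (σ' i) := fun i => congrFun h i
  have hσ : σ = σ' := Equiv.ext fun i => hw <| by
    have := congrArg abs (hcoord i)
    split_ifs at this <;> simpa [abs_of_nonneg (hw0 _)] using this
  subst hσ
  refine Prod.ext rfl (funext fun j => ?_)
  by_cases hj : j = 3
  · exact hj ▸ hb.2.trans hb'.2.symm
  · have hwj : w j ≠ 0 := hw3 ▸ hw.ne hj
    simpa using eq_of_ite_mul_eq hwj (by simpa using hcoord (σ.symm j))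

end Cardinalities

section OrbitSum

lemma sum_bool_pi_fin_four {M : Type*} [AddCommMonoid M] (f : (Fin 4 → Bool) → M) :
    ∑ ε, f ε = ∑ a, ∑ b, ∑ c, ∑ d, f ![a, b, c, d] := by
  simp only [← (Fin.consEquiv fun _ => Bool).sum_comp, Fintype.sum_prod_type, Fintype.sum_unique]
  congr!

/-- `∑_ε ε_i ε_j ε_k ε_l = 16 (δ_ij δ_kl + δ_ik δ_jl + δ_il δ_jk - 2 δ_ijkl)`, so summing
`(u ⬝ᵥ ε v)² ⟨A (ε v), ε v⟩` over the sign changes `ε` leaves `16` times the quadratic form in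
`(v i ^ 2)_i` with these coefficients. -/
def signSumCoeff (u : Fin 4 → ℝ) (A : Matrix (Fin 4) (Fin 4) ℝ) (i k : Fin 4) : ℝ :=
  u i ^ 2 * A k k + 2 * u i * u k * A i k - if i = k then 2 * u i ^ 2 * A i i else 0

lemma sum_signs_sq_dotProduct_mul (u v : Fin 4 → ℝ) (A : Matrix (Fin 4) (Fin 4) ℝ) :
    ∑ ε, (u ⬝ᵥ signedPermute (1, ε) v) ^ 2
        * (A *ᵥ signedPermute (1, ε) v ⬝ᵥ signedPermute (1, ε) v)
      = 16 * ∑ i, ∑ k, signSumCoeff u A i k * (v i ^ 2 * v k ^ 2) := by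
  simp only [sum_bool_pi_fin_four, Fintype.sum_bool, signedPermute, signSumCoeff, dotProduct,
    mulVec, Fin.sum_univ_four]
  simp only [Perm.coe_one, id_eq, Matrix.cons_val, Fin.isValue, Fin.reduceEq, ↓reduceIte,
    Bool.false_eq_true, one_mul, neg_mul, mul_neg, sub_zero]
  ring

def evenPermsFin4 : List (Perm (Fin 4)) :=
  [⟨![0, 1, 2, 3], ![0, 1, 2, 3], by decide, by decide⟩,
   ⟨![0, 2, 3, 1], ![0, 3, 1, 2], by decide, by decide⟩,
   ⟨![0, 3, 1, 2], ![0, 2, 3, 1], by decide, by decide⟩,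
   ⟨![1, 0, 3, 2], ![1, 0, 3, 2], by decide, by decide⟩,
   ⟨![1, 2, 0, 3], ![2, 0, 1, 3], by decide, by decide⟩,
   ⟨![1, 3, 2, 0], ![3, 0, 2, 1], by decide, by decide⟩,
   ⟨![2, 0, 1, 3], ![1, 2, 0, 3], by decide, by decide⟩,
   ⟨![2, 1, 3, 0], ![3, 1, 0, 2], by decide, by decide⟩,
   ⟨![2, 3, 0, 1], ![2, 3, 0, 1], by decide, by decide⟩,
   ⟨![3, 0, 2, 1], ![1, 3, 2, 0], by decide, by decide⟩,
   ⟨![3, 1, 0, 2], ![2, 1, 3, 0], by decide, by decide⟩,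
   ⟨![3, 2, 1, 0], ![3, 2, 1, 0], by decide, by decide⟩]

lemma sum_evenPerms_fin_four {M : Type*} [AddCommMonoid M] (f : Perm (Fin 4) → M) :
    ∑ σ ∈ univ.filter (fun σ : Perm (Fin 4) => Perm.sign σ = 1), f σ
      = (evenPermsFin4.map f).sum := by
  rw [show univ.filter (fun σ : Perm (Fin 4) => Perm.sign σ = 1) = evenPermsFin4.toFinset by
    decide, List.sum_toFinset _ (by decide)]

/-- Each ordered pair of distinct coordinates is hit by exactly one even permutation. -/
lemma sum_evenPerms_apply_mul_apply (p : Fin 4 → ℝ) (i k : Fin 4) :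
    ∑ σ ∈ univ.filter (fun σ : Perm (Fin 4) => Perm.sign σ = 1), p (σ i) * p (σ k)
      = if i = k then 3 * ∑ j, p j ^ 2 else (∑ j, p j) ^ 2 - ∑ j, p j ^ 2 := by
  rw [sum_evenPerms_fin_four]
  fin_cases i <;> fin_cases k <;>
    simp only [evenPermsFin4, List.map_cons, List.map_nil, List.sum_cons, List.sum_nil, add_zero,
      coe_fn_mk, Matrix.cons_val, Fin.sum_univ_four, Fin.isValue, Fin.zero_eta, Fin.mk_one,
      Fin.reduceFinMk, Fin.reduceEq, ↓reduceIte] <;> ring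

lemma sum_evenSignedPermSet_sq_dotProduct_mul (u η : Fin 4 → ℝ) (A : Matrix (Fin 4) (Fin 4) ℝ) :
    ∑ x ∈ evenSignedPermSet (Fin 4),
        (u ⬝ᵥ signedPermute x η) ^ 2 * (A *ᵥ signedPermute x η ⬝ᵥ signedPermute x η)
      = 16 * (((η ⬝ᵥ η) ^ 2 - ∑ i, η i ^ 4) * (2 * (A *ᵥ u ⬝ᵥ u) + trace A * (u ⬝ᵥ u))
          + 3 * (2 * ∑ i, η i ^ 4 - (η ⬝ᵥ η) ^ 2) * ∑ i, u i ^ 2 * A i i) := by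
  calc _ = ∑ σ ∈ univ.filter (fun σ : Perm (Fin 4) => Perm.sign σ = 1),
          16 * ∑ i, ∑ k, signSumCoeff u A i k * (η (σ i) ^ 2 * η (σ k) ^ 2) := by
        rw [evenSignedPermSet, sum_product]
        exact sum_congr rfl fun σ _ => sum_signs_sq_dotProduct_mul u (fun i => η (σ i)) A
    _ = 16 * ∑ i, ∑ k, signSumCoeff u A i k *
          ∑ σ ∈ univ.filter (fun σ : Perm (Fin 4) => Perm.sign σ = 1),
            η (σ i) ^ 2 * η (σ k) ^ 2 := by
        rw [← mul_sum]
        congr 1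
        simp only [mul_sum]
        rw [sum_comm]
        exact sum_congr rfl fun i _ => sum_comm
    _ = _ := by
        simp only [sum_evenPerms_apply_mul_apply (fun j => η j ^ 2)]
        simp only [signSumCoeff, Fin.sum_univ_four, dotProduct, mulVec, trace, diag_apply,
          Fin.isValue, Fin.reduceEq, ↓reduceIte, mul_ite, sub_zero]
        ring

end OrbitSum

open scoped goldenRatio

noncomputable def cell600 : Finset (Fin 4 → ℝ) :=
  signedPerms ![1, 1, 1, 1] ∪ signedPerms ![2, 0, 0, 0] ∪ evenSignedPerms ![φ, 1, φ⁻¹, 0]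
lemma inv_goldenRatio_eq_sub_one : φ⁻¹ = φ - 1 := by
  rw [Real.inv_goldenRatio, ← Real.one_sub_goldenConj]; ring

lemma injective_goldenVertex : Function.Injective ![φ, 1, φ⁻¹, 0] := by
  have h1 := Real.one_lt_goldenRatio
  have h2 := Real.goldenRatio_lt_two
  rw [inv_goldenRatio_eq_sub_one]
  generalize φ = c at h1 h2 ⊢
  intro i j hij
  fin_cases i <;> fin_cases j <;>
    simp only [Matrix.cons_val, Fin.isValue, Fin.zero_eta, Fin.mk_one, Fin.reduceFinMk] at hij ⊢ <;>
    linarith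

lemma goldenVertex_nonneg (i : Fin 4) : 0 ≤ ![φ, 1, φ⁻¹, 0] i := by
  have := Real.goldenRatio_pos
  fin_cases i <;> simp only [Fin.zero_eta, Fin.mk_one, Fin.reduceFinMk, Matrix.cons_val] <;>
    positivity

lemma dotProduct_self_goldenVertex : ![φ, 1, φ⁻¹, 0] ⬝ᵥ ![φ, 1, φ⁻¹, 0] = 4 := by
  have h2 := Real.goldenRatio_sq
  rw [inv_goldenRatio_eq_sub_one]
  generalize φ = c at h2 ⊢
  simp only [dotProduct, Fin.sum_univ_four, Matrix.cons_val]
  linear_combination 2 * h2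

lemma sum_pow_four_goldenVertex : ∑ i, ![φ, 1, φ⁻¹, 0] i ^ 4 = 8 := by
  have h2 := Real.goldenRatio_sq
  rw [inv_goldenRatio_eq_sub_one]
  generalize φ = c at h2 ⊢
  simp only [Fin.sum_univ_four, Matrix.cons_val]
  linear_combination (2 * c ^ 2 - 2 * c + 6) * h2

lemma signedPermute_mem_cell600 {x : Perm (Fin 4) × (Fin 4 → Bool)}
    (hx : x ∈ evenSignedPermSet (Fin 4)) {η : Fin 4 → ℝ} (hη : η ∈ cell600) :
    signedPermute x η ∈ cell600 := by
  simp only [cell600, mem_union] at hη ⊢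
  rcases hη with (hη | hη) | hη
  · exact .inl (.inl (signedPermute_mem_signedPerms x hη))
  · exact .inl (.inr (signedPermute_mem_signedPerms x hη))
  · exact .inr (signedPermute_mem_evenSignedPerms hx hη)

lemma sum_cell600 {g : (Fin 4 → ℝ) → ℝ} (hg : ∀ x η, g (signedPermute x η) = g η) :
    ∑ η ∈ cell600, g η = 16 * g ![1, 1, 1, 1] + 8 * g ![2, 0, 0, 0] + 96 * g ![φ, 1, φ⁻¹, 0] := by
  have hq1 : ∑ i, ![(1 : ℝ), 1, 1, 1] i ^ 4 = 4 := by
    simp only [Fin.sum_univ_four, Matrix.cons_val]; norm_num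
  have hq2 : ∑ i, ![(2 : ℝ), 0, 0, 0] i ^ 4 = 16 := by
    simp only [Fin.sum_univ_four, Matrix.cons_val]; norm_num
  have hq {η w : Fin 4 → ℝ} (hη : η ∈ signedPerms w ∨ η ∈ evenSignedPerms w) :
      ∑ i, η i ^ 4 = ∑ i, w i ^ 4 := by
    rcases hη with hη | hη
    · exact apply_eq_of_mem_signedPerms (g := fun η => ∑ i, η i ^ 4) sum_pow_four_signedPermute hη
    · exact apply_eq_of_mem_evenSignedPerms (g := fun η => ∑ i, η i ^ 4)
        sum_pow_four_signedPermute hη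
  have h12 : Disjoint (signedPerms ![1, 1, 1, 1]) (signedPerms ![2, 0, 0, 0]) :=
    disjoint_left.2 fun η h1 h2 => by
      have := (hq (.inl h1)).symm.trans (hq (.inl h2))
      norm_num [hq1, hq2] at this
  have h3 : Disjoint (signedPerms ![1, 1, 1, 1] ∪ signedPerms ![2, 0, 0, 0])
      (evenSignedPerms ![φ, 1, φ⁻¹, 0]) :=
    disjoint_left.2 fun η h12 h3 => by
      have e3 := hq (.inr h3)
      rcases mem_union.1 h12 with h | h <;>
      · have := (hq (.inl h)).symm.trans e3
        rw [sum_pow_four_goldenVertex] at this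
        norm_num [hq1, hq2] at this
  have h1card : #(signedPerms ![1, 1, 1, 1]) = 16 :=
    card_signedPerms_of_forall_eq (a := 1) (fun i => by fin_cases i <;> rfl) one_ne_zero
  have h2card : #(signedPerms ![2, 0, 0, 0]) = 8 := by
    rw [show ![(2 : ℝ), 0, 0, 0] = Pi.single 0 2 by ext i; fin_cases i <;> simp]
    exact card_signedPerms_single two_ne_zero
  have h3card : #(evenSignedPerms ![φ, 1, φ⁻¹, 0]) = 96 :=
    card_evenSignedPerms injective_goldenVertex goldenVertex_nonneg rfl
  have horbit {s : Finset (Fin 4 → ℝ)} {w : Fin 4 → ℝ} (hs : ∀ η ∈ s, g η = g w) :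
      ∑ η ∈ s, g η = #s * g w := by
    rw [sum_congr rfl hs, sum_const, nsmul_eq_mul]
  rw [cell600, sum_union h3, sum_union h12,
    horbit fun η h => apply_eq_of_mem_signedPerms hg h, h1card,
    horbit fun η h => apply_eq_of_mem_signedPerms hg h, h2card,
    horbit fun η h => apply_eq_of_mem_evenSignedPerms hg h, h3card]
  push_cast
  ring

lemma dotProduct_self_of_mem_cell600 {η : Fin 4 → ℝ} (hη : η ∈ cell600) : η ⬝ᵥ η = 4 := by
  have hg := dotProduct_self_signedPermute (ι := Fin 4)
  simp only [cell600, mem_union] at hη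
  rcases hη with (hη | hη) | hη
  · rw [apply_eq_of_mem_signedPerms (g := fun η => η ⬝ᵥ η) hg hη]
    simp only [cons_dotProduct_cons, dotProduct_of_isEmpty]; norm_num
  · rw [apply_eq_of_mem_signedPerms (g := fun η => η ⬝ᵥ η) hg hη]
    simp only [cons_dotProduct_cons, dotProduct_of_isEmpty]; norm_num
  · rw [apply_eq_of_mem_evenSignedPerms (g := fun η => η ⬝ᵥ η) hg hη, dotProduct_self_goldenVertex]

lemma sum_cell600_sq_dotProduct_mul (u : Fin 4 → ℝ) (A : Matrix (Fin 4) (Fin 4) ℝ) :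
    ∑ η ∈ cell600, (u ⬝ᵥ η) ^ 2 * (A *ᵥ η ⬝ᵥ η)
      = 160 * (A *ᵥ u ⬝ᵥ u) + 80 * trace A * (u ⬝ᵥ u) := by
  have havg := card_smul_sum_eq_sum_sum_signedPermute (G := evenSignedPermSet (Fin 4))
    (fun x hx η hη => signedPermute_mem_cell600 hx hη) fun η => (u ⬝ᵥ η) ^ 2 * (A *ᵥ η ⬝ᵥ η)
  have hG : #(evenSignedPermSet (Fin 4)) = 192 := rfl
  have hsum : ∑ η ∈ cell600, ∑ x ∈ evenSignedPermSet (Fin 4),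
      (u ⬝ᵥ signedPermute x η) ^ 2 * (A *ᵥ signedPermute x η ⬝ᵥ signedPermute x η)
      = 30720 * (A *ᵥ u ⬝ᵥ u) + 15360 * trace A * (u ⬝ᵥ u) := by
    rw [sum_congr rfl fun η _ => sum_evenSignedPermSet_sq_dotProduct_mul u η A,
      sum_cell600 fun x η => by rw [dotProduct_self_signedPermute, sum_pow_four_signedPermute],
      dotProduct_self_goldenVertex, sum_pow_four_goldenVertex]
    simp only [cons_dotProduct_cons, dotProduct_of_isEmpty, Fin.sum_univ_four, Matrix.cons_val]
    ring
  rw [hG, hsum, nsmul_eq_mul, Nat.cast_ofNat] at havg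
  linarith

lemma sum_cell600_sq_dotProduct (u : Fin 4 → ℝ) :
    ∑ η ∈ cell600, (u ⬝ᵥ η) ^ 2 = 120 * (u ⬝ᵥ u) := by
  have h := sum_cell600_sq_dotProduct_mul u 1
  rw [sum_congr rfl fun η hη => by rw [one_mulVec, dotProduct_self_of_mem_cell600 hη],
    ← sum_mul, one_mulVec, trace_one, Fintype.card_fin, Nat.cast_ofNat] at h
  linarith

theorem cell600_four_averaging_general (c : ℝ) (hc : c = (1 + Real.sqrt 5) / 2)
    (J : Finset (Fin 4 → ℝ))
    (hJ : J = signedPerms ![1, 1, 1, 1] ∪ signedPerms ![2, 0, 0, 0]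
              ∪ evenSignedPerms ![c, 1, c⁻¹, 0])
    (u : Fin 4 → ℝ)
    (A : Matrix (Fin 4) (Fin 4) ℝ) :
    (∑ η ∈ J, (u ⬝ᵥ η) ^ 2 = 120 * (u ⬝ᵥ u)) ∧
    (∑ η ∈ J, (u ⬝ᵥ η) ^ 2 * (A.mulVec η ⬝ᵥ η)
      = 160 * (A.mulVec u ⬝ᵥ u) + 80 * Matrix.trace A * (u ⬝ᵥ u)) ∧
    (u ⬝ᵥ u = 1 →
      (∑ η ∈ J, (u ⬝ᵥ η) ^ 2 * (A.mulVec η ⬝ᵥ η)) / (∑ η ∈ J, (u ⬝ᵥ η) ^ 2)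
        = (8 / 3) * ((2 / 4) * (A.mulVec u ⬝ᵥ u) + (1 / 4) * Matrix.trace A)) := by
  obtain rfl : J = cell600 := by rw [hJ, hc]; rfl
  refine ⟨sum_cell600_sq_dotProduct u, sum_cell600_sq_dotProduct_mul u A, fun hu => ?_⟩
  rw [sum_cell600_sq_dotProduct, sum_cell600_sq_dotProduct_mul, hu]
  ring

/-- The 120 vertices of the 600-cell form a 4-averaging set in `ℝ⁴`:
`∑ ⟨u,η⟩² = 120|u|²`, `∑ ⟨u,η⟩²⟨Aη,η⟩ = 160⟨Au,u⟩ + 80 tr(A)|u|²`, and for unit `u` the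
ratio equals `(8/3)((2/4)⟨Au,u⟩ + (1/4)tr A)`. Here `c` is the golden ratio; the vertex set
consists of `(±1,±1,±1,±1)`, all permutations of `(±2,0,0,0)`, and all even permutations
of `(±c,±1,±1/c,0)`. -/
theorem cell600_four_averaging (c : ℝ) (hc : c = (1 + Real.sqrt 5) / 2)
    (J : Finset (Fin 4 → ℝ))
    (hJ : J = signedPerms ![1, 1, 1, 1] ∪ signedPerms ![2, 0, 0, 0]
              ∪ evenSignedPerms ![c, 1, c⁻¹, 0])
    (u : Fin 4 → ℝ)
    (A : Matrix (Fin 4) (Fin 4) ℝ) (hA : A.IsSymm) :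
    (∑ η ∈ J, (u ⬝ᵥ η) ^ 2 = 120 * (u ⬝ᵥ u)) ∧
    (∑ η ∈ J, (u ⬝ᵥ η) ^ 2 * (A.mulVec η ⬝ᵥ η)
      = 160 * (A.mulVec u ⬝ᵥ u) + 80 * Matrix.trace A * (u ⬝ᵥ u)) ∧
    (u ⬝ᵥ u = 1 →
      (∑ η ∈ J, (u ⬝ᵥ η) ^ 2 * (A.mulVec η ⬝ᵥ η)) / (∑ η ∈ J, (u ⬝ᵥ η) ^ 2)
        = (8 / 3) * ((2 / 4) * (A.mulVec u ⬝ᵥ u) + (1 / 4) * Matrix.trace A)) :=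
  cell600_four_averaging_general c hc J hJ u A
end

section
/- Let J ⊂ ℝ² be the 8 vectors { (±1/√2, ±1/√2), (±1, 0), (0, ±1) } (all sign choices). Then for every unit vector u ∈ ℝ² and every symmetric 2×2 real matrix A: (i) Σ_{η ∈ J} ⟨u, η⟩⁴ = 3; (ii) Σ_{η ∈ J} ⟨u, η⟩⁴ ⟨A η, η⟩ = (1/2)·tr(A) + 2·⟨A u, u⟩. Consequently the ratio (ii)/(i) equals (1/6)·tr(A) + (4/6)·⟨Au,u⟩, so J is a 6-averaging set in ℝ² with d = 1. -/
/-!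
Both sums are polynomials in `u` and `A`, homogeneous of degree 4 in `u`, so they are identities
valid for every `u` once the constants are replaced by `(u ⬝ᵥ u) ^ 2` and `u ⬝ᵥ u`. The diagonal
vectors are `(√2)⁻¹ • (±1, ±1)`, so their terms are those of `(±1, ±1)` scaled by
`(√2)⁻¹ ^ 4 = 1 / 4` in the first sum and by `(√2)⁻¹ ^ 6 = 1 / 8` in the second.
-/

open Matrix

noncomputable def eightVectors : Fin 8 → Fin 2 → ℝ :=
  ![![(√2)⁻¹, (√2)⁻¹], ![(√2)⁻¹, -(√2)⁻¹], ![-(√2)⁻¹, (√2)⁻¹], ![-(√2)⁻¹, -(√2)⁻¹],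
    ![1, 0], ![-1, 0], ![0, 1], ![0, -1]]

theorem inv_sqrt_two_sq : (√2)⁻¹ ^ 2 = 1 / 2 := by
  rw [inv_pow, Real.sq_sqrt zero_le_two, one_div]

theorem sum_eightVectors_dotProduct_pow_four (u : Fin 2 → ℝ) :
    ∑ j, (u ⬝ᵥ eightVectors j) ^ 4 = 3 * (u ⬝ᵥ u) ^ 2 := by
  simp only [Fin.sum_univ_eight, eightVectors, dotProduct, Fin.sum_univ_two, Fin.isValue,
    cons_val', cons_val_zero, cons_val_fin_one, cons_val_one, mul_neg, cons_val, mul_one,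
    mul_zero, add_zero, zero_add]
  -- `s ^ 4 - 1 / 4 = (s ^ 2 + 1 / 2) * (s ^ 2 - 1 / 2)` for `s = (√2)⁻¹`; likewise
  -- `s ^ 6 - 1 / 8 = (s ^ 4 + s ^ 2 / 2 + 1 / 4) * (s ^ 2 - 1 / 2)` in the next lemma.
  linear_combination
    2 * ((u 0 + u 1) ^ 4 + (u 0 - u 1) ^ 4) * ((√2)⁻¹ ^ 2 + 1 / 2) * inv_sqrt_two_sq

theorem sum_eightVectors_dotProduct_pow_four_mul_quadForm (u : Fin 2 → ℝ)
    (A : Matrix (Fin 2) (Fin 2) ℝ) :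
    ∑ j, (u ⬝ᵥ eightVectors j) ^ 4 * (A *ᵥ eightVectors j ⬝ᵥ eightVectors j) =
      (u ⬝ᵥ u) ^ 2 * trace A / 2 + 2 * (u ⬝ᵥ u) * (A *ᵥ u ⬝ᵥ u) := by
  simp only [Fin.sum_univ_eight, eightVectors, dotProduct, mulVec, Fin.sum_univ_two, trace_fin_two,
    Fin.isValue, cons_val', cons_val_zero, cons_val_fin_one, cons_val_one, mul_neg, cons_val,
    mul_one, mul_zero, add_zero, neg_neg, zero_add]
  linear_combination
    2 * ((u 0 + u 1) ^ 4 * (A 0 0 + A 0 1 + A 1 0 + A 1 1)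
      + (u 0 - u 1) ^ 4 * (A 0 0 - A 0 1 - A 1 0 + A 1 1))
      * ((√2)⁻¹ ^ 4 + (√2)⁻¹ ^ 2 / 2 + 1 / 4) * inv_sqrt_two_sq

theorem eight_vectors_six_averaging_general
    (η : Fin 8 → Fin 2 → ℝ)
    (hη : η = ![![(Real.sqrt 2)⁻¹, (Real.sqrt 2)⁻¹], ![(Real.sqrt 2)⁻¹, -(Real.sqrt 2)⁻¹],
                ![-(Real.sqrt 2)⁻¹, (Real.sqrt 2)⁻¹], ![-(Real.sqrt 2)⁻¹, -(Real.sqrt 2)⁻¹],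
                ![1, 0], ![-1, 0], ![0, 1], ![0, -1]])
    (u : Fin 2 → ℝ) (hu : u ⬝ᵥ u = 1)
    (A : Matrix (Fin 2) (Fin 2) ℝ) :
    (∑ j : Fin 8, (u ⬝ᵥ η j) ^ 4 = 3) ∧
    (∑ j : Fin 8, (u ⬝ᵥ η j) ^ 4 * (A.mulVec (η j) ⬝ᵥ η j)
      = (1 / 2) * Matrix.trace A + 2 * (A.mulVec u ⬝ᵥ u)) ∧
    ((∑ j : Fin 8, (u ⬝ᵥ η j) ^ 4 * (A.mulVec (η j) ⬝ᵥ η j)) /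
        (∑ j : Fin 8, (u ⬝ᵥ η j) ^ 4)
      = (1 / 6) * Matrix.trace A + (4 / 6) * (A.mulVec u ⬝ᵥ u)) := by
  obtain rfl : η = eightVectors := hη
  have hweights : ∑ j, (u ⬝ᵥ eightVectors j) ^ 4 = 3 := by
    rw [sum_eightVectors_dotProduct_pow_four, hu]
    norm_num
  have hweighted : ∑ j, (u ⬝ᵥ eightVectors j) ^ 4 * (A *ᵥ eightVectors j ⬝ᵥ eightVectors j)
      = 1 / 2 * trace A + 2 * (A *ᵥ u ⬝ᵥ u) := by
    rw [sum_eightVectors_dotProduct_pow_four_mul_quadForm, hu]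
    ring
  refine ⟨hweights, hweighted, ?_⟩
  rw [hweights, hweighted]
  ring

/-- The 8 vectors `(±1/√2, ±1/√2), (±1, 0), (0, ±1)` form a 6-averaging set in `ℝ²` with
`d = 1`: for any unit vector `u` and symmetric matrix `A`, `∑ ⟨u,η⟩⁴ = 3`,
`∑ ⟨u,η⟩⁴⟨Aη,η⟩ = (1/2) tr A + 2⟨Au,u⟩`, and the ratio equals
`(1/6) tr A + (4/6)⟨Au,u⟩`. -/
theorem eight_vectors_six_averaging
    (η : Fin 8 → Fin 2 → ℝ)
    (hη : η = ![![(Real.sqrt 2)⁻¹, (Real.sqrt 2)⁻¹], ![(Real.sqrt 2)⁻¹, -(Real.sqrt 2)⁻¹],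
                ![-(Real.sqrt 2)⁻¹, (Real.sqrt 2)⁻¹], ![-(Real.sqrt 2)⁻¹, -(Real.sqrt 2)⁻¹],
                ![1, 0], ![-1, 0], ![0, 1], ![0, -1]])
    (u : Fin 2 → ℝ) (hu : u ⬝ᵥ u = 1)
    (A : Matrix (Fin 2) (Fin 2) ℝ) (hA : A.IsSymm) :
    (∑ j : Fin 8, (u ⬝ᵥ η j) ^ 4 = 3) ∧
    (∑ j : Fin 8, (u ⬝ᵥ η j) ^ 4 * (A.mulVec (η j) ⬝ᵥ η j)
      = (1 / 2) * Matrix.trace A + 2 * (A.mulVec u ⬝ᵥ u)) ∧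
    ((∑ j : Fin 8, (u ⬝ᵥ η j) ^ 4 * (A.mulVec (η j) ⬝ᵥ η j)) /
        (∑ j : Fin 8, (u ⬝ᵥ η j) ^ 4)
      = (1 / 6) * Matrix.trace A + (4 / 6) * (A.mulVec u ⬝ᵥ u)) :=
  eight_vectors_six_averaging_general η hη u hu A
end
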